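/- arXiv:1504.04301 — 9 statements merged into one kernel-verified Lean document; each statement's English description precedes it below -/
import Mathlib

section
/- Let n ≥ r ≥ 1 and let p, q ∈ C^{n+1} be linearly independent, with all (n+1 choose 2) of the 2 × 2 minors p_i q_j − p_j q_i (i < j) nonzero and all coordinates of p and q nonzero. Then the vectors p^{⋆(r-k)} ⋆ q^{⋆k} for k = 0, ..., r are linearly independent in C^{n+1}; in particular the span of all r-fold coordinatewise products of elements of span{p,q} has dimension r+1. -/
open Polynomial in
private lemma had_aux_LI {n r : ℕ} (hrn : r ≤ n) (p q : Fin (n + 1) → ℂ)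
    (hminor : ∀ i j : Fin (n + 1), i < j → p i * q j - p j * q i ≠ 0)
    (hq : ∀ i, q i ≠ 0) :
    LinearIndependent ℂ (fun k : Fin (r + 1) => p ^ (r - (k : ℕ)) * q ^ (k : ℕ)) := by
  rw [Fintype.linearIndependent_iff]
  intro c hc k
  set P : ℂ[X] := ∑ j : Fin (r + 1), Polynomial.C (c j) * Polynomial.X ^ (r - (j : ℕ)) with hP
  have hPdeg : P.natDegree < n + 1 := by
    have : P.natDegree ≤ r := by
      apply Polynomial.natDegree_sum_le_of_forall_le
      intro j _
      calc (Polynomial.C (c j) * Polynomial.X ^ (r - (j : ℕ))).natDegree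
          ≤ (Polynomial.X ^ (r - (j : ℕ)) : ℂ[X]).natDegree := natDegree_C_mul_le _ _
        _ = r - (j : ℕ) := natDegree_X_pow _
        _ ≤ r := Nat.sub_le _ _
    omega
  have heval : ∀ i : Fin (n + 1), P.eval (p i / q i) = 0 := by
    intro i
    have hci : (∑ j : Fin (r + 1), c j * (p i ^ (r - (j : ℕ)) * q i ^ (j : ℕ))) = 0 := by
      have := congrFun hc i
      simpa using this
    have hqr : (q i) ^ r ≠ 0 := pow_ne_zero _ (hq i)
    have hPe : P.eval (p i / q i) = ∑ j : Fin (r + 1), c j * (p i / q i) ^ (r - (j : ℕ)) := by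
      simp [hP, Polynomial.eval_finset_sum]
    have key : P.eval (p i / q i) * (q i) ^ r = 0 := by
      rw [hPe, Finset.sum_mul, ← hci]
      apply Finset.sum_congr rfl
      intro j _
      have hjr : (j : ℕ) ≤ r := Nat.lt_succ_iff.mp j.isLt
      have h2 : (q i) ^ r = (q i) ^ (r - (j : ℕ)) * (q i) ^ (j : ℕ) := by
        rw [← pow_add]; congr 1; omega
      have h1 : (p i / q i) ^ (r - (j : ℕ)) * q i ^ r
          = p i ^ (r - (j : ℕ)) * q i ^ (j : ℕ) := by
        rw [div_pow, h2]
        rw [← mul_assoc, div_mul_cancel₀ _ (pow_ne_zero _ (hq i))]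
      rw [mul_assoc, h1]
    exact (mul_eq_zero.mp key).resolve_right hqr
  have hinj : Function.Injective (fun i : Fin (n + 1) => p i / q i) := by
    intro i j hij
    by_contra hne
    simp only [div_eq_div_iff (hq i) (hq j)] at hij
    rcases lt_or_gt_of_ne hne with h | h
    · exact hminor i j h (by rw [sub_eq_zero]; linear_combination hij)
    · exact hminor j i h (by rw [sub_eq_zero]; linear_combination -hij)
  have hP0 : P = 0 := by
    apply Polynomial.eq_zero_of_natDegree_lt_card_of_eval_eq_zero P hinj heval
    simpa using hPdeg
  have hcoeff := congrArg (fun Q : ℂ[X] => Q.coeff (r - (k : ℕ))) hP0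
  simp only [hP, Polynomial.finset_sum_coeff, Polynomial.coeff_C_mul, Polynomial.coeff_X_pow,
    Polynomial.coeff_zero] at hcoeff
  rw [Finset.sum_eq_single k] at hcoeff
  · simpa using hcoeff
  · intro j _ hjk
    have hj : (j : ℕ) ≤ r := Nat.lt_succ_iff.mp j.isLt
    have hk : (k : ℕ) ≤ r := Nat.lt_succ_iff.mp k.isLt
    have : r - (j : ℕ) ≠ r - (k : ℕ) := by
      intro h
      exact hjk (Fin.ext (by omega))
    simp only [if_neg (Ne.symm this), mul_zero]
  · intro h
    exact absurd (Finset.mem_univ k) h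

private lemma had_aux_prod {N : ℕ} (p q : Fin N → ℂ) :
    ∀ (m : ℕ) (v : Fin m → (Fin N → ℂ)), (∀ i, v i ∈ Submodule.span ℂ {p, q}) →
      ∏ i, v i ∈ Submodule.span ℂ
        (Set.range fun k : Fin (m + 1) => p ^ (m - (k : ℕ)) * q ^ (k : ℕ)) := by
  intro m
  induction m with
  | zero =>
    intro v hv
    simp only [Finset.univ_eq_empty, Finset.prod_empty]
    exact Submodule.subset_span ⟨0, by simp⟩
  | succ m ih =>
    intro v hv
    rw [Fin.prod_univ_castSucc]
    have h1 := ih (fun i => v (Fin.castSucc i)) (fun i => hv _)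
    have h2 := hv (Fin.last m)
    have hmul := Submodule.mul_mem_mul h1 h2
    rw [Submodule.span_mul_span] at hmul
    refine Submodule.span_le.mpr ?_ hmul
    rintro x hx
    rw [Set.mem_mul] at hx
    obtain ⟨a, ⟨k, rfl⟩, b, hb, rfl⟩ := hx
    have hk : (k : ℕ) ≤ m := Nat.lt_succ_iff.mp k.isLt
    rcases hb with rfl | rfl
    · refine Submodule.subset_span ⟨Fin.castSucc k, ?_⟩
      have h1 : m + 1 - (k : ℕ) = (m - (k : ℕ)) + 1 := by omega
      simp only [Fin.coe_castSucc, h1, pow_succ]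
      ring
    · refine Submodule.subset_span ⟨k.succ, ?_⟩
      have h1 : m + 1 - ((k : ℕ) + 1) = m - (k : ℕ) := by omega
      simp only [Fin.val_succ, h1, pow_succ]
      ring

private lemma had_aux_exists {N : ℕ} (p q : Fin N → ℂ) (a b : ℕ) :
    ∃ v : Fin (a + b) → (Fin N → ℂ), (∀ i, v i ∈ Submodule.span ℂ {p, q}) ∧
      ∏ i, v i = p ^ a * q ^ b := by
  refine ⟨Fin.append (fun _ => p) (fun _ => q), ?_, ?_⟩
  · intro i
    refine Fin.addCases (fun i => ?_) (fun i => ?_) i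
    · rw [Fin.append_left]
      exact Submodule.subset_span (Set.mem_insert _ _)
    · rw [Fin.append_right]
      exact Submodule.subset_span (Set.mem_insert_of_mem _ rfl)
  · rw [Fin.prod_univ_add]
    simp [Finset.prod_const]

/-- For a generic line (all 2×2 minors and all coordinates nonzero) and `1 ≤ r ≤ n`,
the vectors `p^{⋆(r-k)} ⋆ q^{⋆k}` are linearly independent; in particular the `r`-th
Hadamard power of the line is a linear space of dimension `r + 1`. -/
theorem hadamard_power_line_linear (n r : ℕ) (hr : 1 ≤ r) (hrn : r ≤ n)
    (p q : Fin (n + 1) → ℂ) (hind : LinearIndependent ℂ ![p, q])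
    (hminor : ∀ i j : Fin (n + 1), i < j → p i * q j - p j * q i ≠ 0)
    (hp : ∀ i, p i ≠ 0) (hq : ∀ i, q i ≠ 0) :
    LinearIndependent ℂ (fun k : Fin (r + 1) => p ^ (r - (k : ℕ)) * q ^ (k : ℕ)) ∧
    Module.finrank ℂ
        (Submodule.span ℂ
          {w : Fin (n + 1) → ℂ | ∃ v : Fin r → (Fin (n + 1) → ℂ),
            (∀ i, v i ∈ Submodule.span ℂ {p, q}) ∧ w = ∏ i, v i}) = r + 1 := by
  have hLI := had_aux_LI hrn p q hminor hq
  refine ⟨hLI, ?_⟩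
  have hspan : Submodule.span ℂ
      {w : Fin (n + 1) → ℂ | ∃ v : Fin r → (Fin (n + 1) → ℂ),
        (∀ i, v i ∈ Submodule.span ℂ {p, q}) ∧ w = ∏ i, v i} =
      Submodule.span ℂ (Set.range fun k : Fin (r + 1) => p ^ (r - (k : ℕ)) * q ^ (k : ℕ)) := by
    apply le_antisymm
    · rw [Submodule.span_le]
      rintro w ⟨v, hv, rfl⟩
      exact had_aux_prod p q r v hv
    · rw [Submodule.span_le]
      rintro w ⟨k, rfl⟩
      apply Submodule.subset_span
      have hk : (k : ℕ) ≤ r := Nat.lt_succ_iff.mp k.isLt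
      have hab : (r - (k : ℕ)) + (k : ℕ) = r := by omega
      obtain ⟨v, hv, hprod⟩ := had_aux_exists p q (r - (k : ℕ)) (k : ℕ)
      refine ⟨fun i => v (Fin.cast hab.symm i), fun i => hv _, ?_⟩
      show p ^ (r - (k : ℕ)) * q ^ (k : ℕ) = ∏ i : Fin r, v (Fin.cast hab.symm i)
      rw [← hprod]
      exact Fintype.prod_equiv (finCongr hab) _ _ (fun x => rfl)
  rw [hspan, finrank_span_eq_card hLI, Fintype.card_fin]
end

section
/- Let n ≥ 2, n ≥ r, and let L be a line in P^n such that every point of L has at most one zero coordinate (L ∩ Δ_{n−2} = ∅). Then every point of the Hadamard power L^{⋆r} is of the form p_1 ⋆ ... ⋆ p_r with p_i ∈ L; i.e., no closure operation is needed: concretely, for linearly independent vectors u, v ∈ C^{n+1} such that no nontrivial linear combination of u and v has two or more zero coordinates, every nonzero vector in the span of {u^{⋆(r−k)} ⋆ v^{⋆k} : 0 ≤ k ≤ r} that lies in the image closure is an actual r-fold product of elements of span{u,v} (the product map from (span{u,v}∖{0})^r has closed image in P^n). -/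
/-- The projective Zariski closure of a set of coordinate vectors: the points at which
every homogeneous polynomial vanishing on the set vanishes. -/
def zclosure {n : ℕ} (S : Set (Fin n → ℂ)) : Set (Fin n → ℂ) :=
  {x | ∀ (d : ℕ) (f : MvPolynomial (Fin n) ℂ), f.IsHomogeneous d →
    (∀ s ∈ S, MvPolynomial.eval s f = 0) → MvPolynomial.eval x f = 0}

open Polynomial in
lemma key_identity (r : ℕ) (hr1 : 1 ≤ r) (f : ℂ[X]) (hf : f ≠ 0) (hd : f.natDegree ≤ r)
    (z w : ℂ) :
    ∑ k : Fin (r + 1), f.coeff k * (z ^ (k : ℕ) * w ^ (r - (k : ℕ))) =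
      f.leadingCoeff * (w ^ (r - f.natDegree) *
        (f.roots.map (fun ρ => z - ρ * w)).prod) := by
  have hsplit : Splits f := IsAlgClosed.splits f
  have hcard : f.roots.card = f.natDegree := splits_iff_card_roots.mp hsplit
  rcases eq_or_ne w 0 with hw | hw
  · subst hw
    have hLHS : ∑ k : Fin (r + 1), f.coeff k * (z ^ (k : ℕ) * (0:ℂ) ^ (r - (k : ℕ)))
        = f.coeff r * z ^ r := by
      rw [Finset.sum_eq_single (Fin.last r)]
      · simp [Fin.last]
      · intro k _ hk
        have : (k : ℕ) < r := by
          have := k.isLt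
          have : (k:ℕ) ≠ r := fun h => hk (Fin.ext (by simp [h, Fin.last]))
          omega
        simp [zero_pow, Nat.sub_ne_zero_of_lt this]
      · simp
    rw [hLHS]
    have hprod : (f.roots.map (fun ρ => z - ρ * (0:ℂ))).prod = z ^ f.natDegree := by
      simp only [mul_zero, sub_zero]
      rw [Multiset.map_const', Multiset.prod_replicate, hcard]
    rw [hprod]
    rcases eq_or_lt_of_le hd with hdr | hdr
    · rw [hdr]; simp only [Nat.sub_self, pow_zero, one_mul]
      rw [← hdr, Polynomial.coeff_natDegree]
    · rw [Polynomial.coeff_eq_zero_of_natDegree_lt hdr]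
      rw [zero_pow (by omega : r - f.natDegree ≠ 0)]
      ring
  · -- w ≠ 0
    have heval : f.eval (z / w) = ∑ k : Fin (r+1), f.coeff k * (z / w) ^ (k : ℕ) := by
      rw [Polynomial.eval_eq_sum_range' (by omega : f.natDegree < r + 1)]
      rw [← Fin.sum_univ_eq_sum_range]
    have hLHS : ∑ k : Fin (r + 1), f.coeff k * (z ^ (k : ℕ) * w ^ (r - (k : ℕ)))
        = w ^ r * f.eval (z / w) := by
      rw [heval, Finset.mul_sum]
      apply Finset.sum_congr rfl
      intro k _
      have hk : (k : ℕ) ≤ r := by omega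
      have hpow : w ^ (r - (k:ℕ)) * w ^ (k:ℕ) = w ^ r := by
        rw [← pow_add]; congr 1; omega
      rw [← hpow, div_pow]
      field_simp
    rw [hLHS]
    have hexp : f = C f.leadingCoeff * (f.roots.map fun a => X - C a).prod :=
      hsplit.eq_prod_roots
    have heval2 : f.eval (z / w) = f.leadingCoeff * (f.roots.map fun ρ => z / w - ρ).prod := by
      conv_lhs => rw [hexp]
      rw [eval_mul, eval_C, Polynomial.eval_multiset_prod, Multiset.map_map]
      simp
    rw [heval2]
    have hsplitpow : w ^ r = w ^ (r - f.natDegree) * w ^ f.natDegree := by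
      rw [← pow_add]; congr 1; omega
    have hprodeq : (f.roots.map (fun ρ => z - ρ * w)).prod
        = w ^ f.natDegree * (f.roots.map fun ρ => z / w - ρ).prod := by
      have h1 : (f.roots.map (fun ρ => z - ρ * w)) = (f.roots.map (fun ρ => w * (z / w - ρ))) :=
        Multiset.map_congr rfl (fun ρ _ => by field_simp)
      rw [h1, Multiset.prod_map_mul, Multiset.map_const', Multiset.prod_replicate, hcard]
    rw [hprodeq, hsplitpow]
    ring

/-- For a line `L ⊂ ℙⁿ` (spanned by `u, v`) with `L ∩ Δ_{n-2} = ∅` (no nonzero point of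
the line has two or more zero coordinates), `n ≥ 2`, `r ≤ n`, the set of `r`-fold
Hadamard products of points of `L` is projectively closed: every nonzero point of its
Zariski closure is, up to a nonzero scalar, an actual `r`-fold product. -/

theorem hadamard_power_line_no_closure (n r : ℕ) (hn : 2 ≤ n) (hr : r ≤ n) (hr1 : 1 ≤ r)
    (u v : Fin (n + 1) → ℂ) (hind : LinearIndependent ℂ ![u, v])
    (hΔ : ∀ a b : ℂ, ¬(a = 0 ∧ b = 0) → ∀ i j : Fin (n + 1), i ≠ j →
      ¬((a • u + b • v) i = 0 ∧ (a • u + b • v) j = 0)) :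
    ∀ x ∈ zclosure {w : Fin (n + 1) → ℂ | ∃ p : Fin r → (Fin (n + 1) → ℂ),
        (∀ i, p i ∈ Submodule.span ℂ {u, v} ∧ p i ≠ 0) ∧ w = ∏ i, p i},
      x ≠ 0 → ∃ c : ℂ, c ≠ 0 ∧
        ∃ p : Fin r → (Fin (n + 1) → ℂ),
          (∀ i, p i ∈ Submodule.span ℂ {u, v} ∧ p i ≠ 0) ∧ c • x = ∏ i, p i := by
  classical
  intro x hx hx0
  set M : Fin (r + 1) → (Fin (n + 1) → ℂ) :=
    fun k => fun j => u j ^ (k : ℕ) * v j ^ (r - (k : ℕ)) with hM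
  set W : Submodule ℂ (Fin (n + 1) → ℂ) := Submodule.span ℂ (Set.range M) with hWdef
  -- Step A: every actual product lies in W
  have hSW : ∀ w ∈ {w : Fin (n + 1) → ℂ | ∃ p : Fin r → (Fin (n + 1) → ℂ),
      (∀ i, p i ∈ Submodule.span ℂ {u, v} ∧ p i ≠ 0) ∧ w = ∏ i, p i}, w ∈ W := by
    rintro w ⟨p, hp, rfl⟩
    choose a b hab using fun i => (Submodule.mem_span_pair.mp (hp i).1)
    have hprod : (∏ i, p i) = ∑ t ∈ (Finset.univ : Finset (Fin r)).powerset,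
        ((∏ i ∈ t, a i) * ∏ i ∈ Finset.univ \ t, b i) •
          M ⟨t.card, Nat.lt_succ_of_le (by simpa using Finset.card_le_univ t)⟩ := by
      funext j
      rw [Finset.prod_apply, Finset.sum_apply]
      have hpj : ∀ i, p i j = a i * u j + b i * v j := fun i => by
        rw [← hab i]; simp
      calc ∏ i, p i j = ∏ i, (a i * u j + b i * v j) :=
            Finset.prod_congr rfl fun i _ => hpj i
        _ = ∑ t ∈ (Finset.univ : Finset (Fin r)).powerset,
              (∏ i ∈ t, (a i * u j)) * ∏ i ∈ Finset.univ \ t, (b i * v j) :=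
            Finset.prod_add _ _ _
        _ = _ := by
            apply Finset.sum_congr rfl
            intro t _
            have hcard : (Finset.univ \ t).card = r - t.card := by
              rw [Finset.card_sdiff_of_subset (Finset.subset_univ t)]; simp
            rw [Finset.prod_mul_distrib, Finset.prod_mul_distrib,
              Finset.prod_const, Finset.prod_const]
            simp only [Pi.smul_apply, smul_eq_mul, hM, hcard]
            ring
    rw [hprod]
    exact Submodule.sum_mem _ fun t _ =>
      Submodule.smul_mem _ _ (Submodule.subset_span ⟨_, rfl⟩)
  -- Step B: x lies in W
  have hxW : x ∈ W := by
    by_contra hnot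
    obtain ⟨φ, hφx, hφW⟩ := Submodule.exists_dual_map_eq_bot_of_notMem hnot inferInstance
    have hφ0 : ∀ w ∈ W, φ w = 0 := by
      intro w hw
      have : φ w ∈ W.map φ := Submodule.mem_map_of_mem hw
      rwa [hφW, Submodule.mem_bot] at this
    set F : MvPolynomial (Fin (n + 1)) ℂ :=
      ∑ j, MvPolynomial.C (φ (Pi.single j 1)) * MvPolynomial.X j with hF
    have hFhom : F.IsHomogeneous 1 :=
      MvPolynomial.IsHomogeneous.sum _ _ _
        (fun j _ => (MvPolynomial.isHomogeneous_X _ _).C_mul _)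
    have hFeval : ∀ s : Fin (n + 1) → ℂ, MvPolynomial.eval s F = φ s := by
      intro s
      have hs : s = ∑ j, s j • (Pi.single j 1 : Fin (n + 1) → ℂ) := by
        funext j'
        simp [Finset.sum_apply, Pi.single_apply]
      have h2 : φ s = ∑ j, s j * φ (Pi.single j 1) := by
        conv_lhs => rw [hs]
        rw [map_sum]
        simp
      rw [h2, hF, map_sum]
      apply Finset.sum_congr rfl
      intro j _
      simp [mul_comm]
    have h3 : MvPolynomial.eval x F = 0 :=
      hx 1 F hFhom (fun s hs => by rw [hFeval]; exact hφ0 s (hSW s hs))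
    rw [hFeval] at h3
    exact hφx h3
  -- Step C: exhibit x (up to scalar) as an honest product
  obtain ⟨c, hc⟩ := (Submodule.mem_span_range_iff_exists_fun ℂ).mp hxW
  set f : Polynomial ℂ := ∑ k : Fin (r + 1), Polynomial.C (c k) * Polynomial.X ^ (k : ℕ)
    with hfdef
  have hcoeff : ∀ m : Fin (r + 1), f.coeff m = c m := by
    intro m
    rw [hfdef, Polynomial.finset_sum_coeff, Finset.sum_eq_single m]
    · simp
    · intro k _ hk
      rw [Polynomial.coeff_C_mul, Polynomial.coeff_X_pow,
        if_neg (fun h => hk (Fin.ext h.symm)), mul_zero]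
    · intro h; exact absurd (Finset.mem_univ m) h
  have hcoeff' : ∀ m : ℕ, r < m → f.coeff m = 0 := by
    intro m hm
    rw [hfdef, Polynomial.finset_sum_coeff]
    apply Finset.sum_eq_zero
    intro k _
    rw [Polynomial.coeff_C_mul, Polynomial.coeff_X_pow,
      if_neg (by have := k.isLt; omega), mul_zero]
  have hdeg : f.natDegree ≤ r := Polynomial.natDegree_le_iff_coeff_eq_zero.mpr hcoeff'
  have hf0 : f ≠ 0 := by
    intro h
    apply hx0
    have hzero : ∀ m : Fin (r + 1), c m = 0 := fun m => by
      rw [← hcoeff m, h, Polynomial.coeff_zero]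
    rw [← hc]
    simp [hzero]
  have hlead : f.leadingCoeff ≠ 0 := Polynomial.leadingCoeff_ne_zero.mpr hf0
  have hcard : f.roots.card = f.natDegree :=
    Polynomial.splits_iff_card_roots.mp (IsAlgClosed.splits f)
  set L : List ℂ := f.roots.toList with hL
  have hLlen : L.length = f.natDegree := by rw [hL, Multiset.length_toList, hcard]
  have hlenr : L.length ≤ r := hLlen ▸ hdeg
  obtain ⟨hvne, huv⟩ := linearIndependent_fin2.mp hind
  rw [show (![u, v] 1) = v by rfl] at hvne
  have huv' : ∀ ρ : ℂ, ρ • v ≠ u := by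
    intro ρ h
    exact huv ρ (by rw [show (![u, v] 1) = v by rfl, show (![u, v] 0) = u by rfl]; exact h)
  refine ⟨f.leadingCoeff⁻¹, inv_ne_zero hlead, ?_⟩
  set p : Fin r → (Fin (n + 1) → ℂ) := fun i =>
    if h : (i : ℕ) < L.length then u - L.get ⟨i, h⟩ • v else v with hpdef
  refine ⟨p, fun i => ⟨?_, ?_⟩, ?_⟩
  · rw [hpdef]; dsimp only; split
    · exact Submodule.mem_span_pair.mpr ⟨1, -(L.get _), by module⟩
    · exact Submodule.mem_span_pair.mpr ⟨0, 1, by module⟩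
  · rw [hpdef]; dsimp only; split
    · intro h
      exact huv' (L.get _) (by rw [← sub_eq_zero]; rw [sub_eq_zero] at h ⊢; exact h.symm)
    · exact hvne
  · funext j
    rw [Pi.smul_apply, smul_eq_mul, Finset.prod_apply]
    have hxj : x j = ∑ k : Fin (r + 1), f.coeff k * (u j ^ (k : ℕ) * v j ^ (r - (k : ℕ))) := by
      rw [← hc, Finset.sum_apply]
      apply Finset.sum_congr rfl
      intro k _
      rw [Pi.smul_apply, smul_eq_mul, hcoeff]
    rw [hxj, key_identity r hr1 f hf0 hdeg (u j) (v j), ← mul_assoc,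
      inv_mul_cancel₀ hlead, one_mul]
    have hpij : ∀ i : Fin r, p i j =
        (fun m : ℕ => if h : m < L.length then u j - L.get ⟨m, h⟩ * v j else v j) (i : ℕ) := by
      intro i
      rw [hpdef]; dsimp only; split <;> simp
    have hprodp : ∏ i : Fin r, p i j
        = (L.map (fun ρ => u j - ρ * v j)).prod * v j ^ (r - L.length) := by
      calc ∏ i : Fin r, p i j
          = ∏ i ∈ Finset.range r,
              (if h : i < L.length then u j - L.get ⟨i, h⟩ * v j else v j) := by
            rw [← Fin.prod_univ_eq_prod_range]
            exact Finset.prod_congr rfl fun i _ => hpij i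
        _ = (∏ i ∈ Finset.range L.length,
              (if h : i < L.length then u j - L.get ⟨i, h⟩ * v j else v j)) *
            ∏ i ∈ Finset.Ico L.length r,
              (if h : i < L.length then u j - L.get ⟨i, h⟩ * v j else v j) :=
            (Finset.prod_range_mul_prod_Ico _ hlenr).symm
        _ = (L.map (fun ρ => u j - ρ * v j)).prod * v j ^ (r - L.length) := by
            congr 1
            · rw [← Fin.prod_univ_eq_prod_range, ← Fin.prod_univ_fun_getElem L (fun ρ => u j - ρ * v j)]
              apply Finset.prod_congr rfl
              intro i _
              rw [dif_pos i.isLt]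
              rfl
            · rw [Finset.prod_congr rfl (fun i hi => dif_neg (by
                  simp only [Finset.mem_Ico] at hi; omega)),
                Finset.prod_const, Nat.card_Ico]
    rw [hprodp]
    have hLprod : (f.roots.map (fun ρ => u j - ρ * v j)).prod
        = (L.map (fun ρ => u j - ρ * v j)).prod := by
      rw [← Multiset.coe_toList f.roots, Multiset.map_coe, Multiset.prod_coe]
    rw [hLlen, hLprod]
    ring
end

section
/- Let p_1, ..., p_r and q_1, ..., q_r be nonzero vectors in a 2-dimensional subspace L = span{u, v} of C^{n+1}, where all coordinates of u, v are nonzero and all 2×2 minors u_i v_j − u_j v_i (i < j) are nonzero, and suppose r ≤ n. If the coordinatewise products satisfy p_1 ⋆ ... ⋆ p_r = λ · (q_1 ⋆ ... ⋆ q_r) for some nonzero scalar λ, then the multisets of projective points {[p_1], ..., [p_r]} and {[q_1], ..., [q_r]} coincide. -/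
open Finset Polynomial
lemma exists_perm_of_map_eq' {β : Type*} : ∀ {r : ℕ} (f g : Fin r → β),
    Multiset.map f Finset.univ.val = Multiset.map g Finset.univ.val →
    ∃ σ : Equiv.Perm (Fin r), ∀ k, g (σ k) = f k := by
  intro r
  induction r with
  | zero => exact fun f g _ => ⟨1, fun k => k.elim0⟩
  | succ m ih =>
    intro f g h
    have h0 : f 0 ∈ Multiset.map g Finset.univ.val := by
      rw [← h]
      exact Multiset.mem_map_of_mem _ (Finset.mem_univ_val _)
    obtain ⟨j, -, hj⟩ := Multiset.mem_map.mp h0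
    set h' : Fin (m+1) → β := g ∘ (Equiv.swap j 0) with hh'
    have hg' : Multiset.map h' Finset.univ.val = Multiset.map g Finset.univ.val := by
      have : Multiset.map (⇑(Equiv.swap j 0)) Finset.univ.val
          = (Finset.univ : Finset (Fin (m+1))).val := by
        have := Finset.map_univ_equiv (Equiv.swap j 0)
        calc Multiset.map (⇑(Equiv.swap j 0)) Finset.univ.val
            = (Finset.univ.map (Equiv.swap j 0).toEmbedding).val := rfl
          _ = Finset.univ.val := by rw [this]
      rw [hh']
      rw [← Multiset.map_map g (⇑(Equiv.swap j 0)), this]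
    have huniv : (Finset.univ : Finset (Fin (m+1))).val
        = 0 ::ₘ (Multiset.map Fin.succ Finset.univ.val) := by
      rw [Fin.univ_succ]; rfl
    have hcons : Multiset.map f Finset.univ.val = Multiset.map h' Finset.univ.val := by
      rw [hg', h]
    rw [huniv, Multiset.map_cons, Multiset.map_cons, Multiset.map_map, Multiset.map_map] at hcons
    have hh0 : h' 0 = f 0 := by
      simp [hh', Equiv.swap_apply_right, hj]
    rw [← hh0] at hcons
    have htail := (Multiset.cons_inj_right _).mp hcons
    obtain ⟨σ', hσ'⟩ := ih (f ∘ Fin.succ) (h' ∘ Fin.succ) htail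
    refine ⟨(Equiv.Perm.decomposeFin.symm (0, σ')).trans (Equiv.swap j 0), ?_⟩
    intro k
    induction k using Fin.cases with
    | zero => simpa [hh'] using hh0
    | succ i =>
      have : (Equiv.Perm.decomposeFin.symm (0, σ')) i.succ = (σ' i).succ := by
        simp
      simpa [this, hh'] using hσ' i

lemma linfac_ne_zero (a b : ℂ) (hab : a ≠ 0 ∨ b ≠ 0) : C a * X + C b ≠ 0 := by
  intro h
  have h0 : (C a * X + C b).eval 0 = 0 := by rw [h]; simp
  have h1 : (C a * X + C b).eval 1 = 0 := by rw [h]; simp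
  simp at h0 h1
  rcases hab with ha | hb
  · exact ha (by rw [h0] at h1; simpa using h1)
  · exact hb h0

lemma linfac_roots (a b : ℂ) (ha : a ≠ 0) : (C a * X + C b).roots = {-b / a} := by
  have h2 : C a * (X - C (-b / a)) = C a * X + C b := by
    rw [mul_sub, ← C_mul, show a * (-b / a) = -b by field_simp; try ring, map_neg,
      sub_neg_eq_add]
  rw [← h2, Polynomial.roots_C_mul _ ha, Polynomial.roots_X_sub_C]

lemma linfac_natDegree (a b : ℂ) : (C a * X + C b).natDegree = if a = 0 then 0 else 1 := by
  split
  · next h => simp [h]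
  · next h => exact Polynomial.natDegree_linear h

lemma factor_match : ∀ (r : ℕ) (a b c d : Fin r → ℂ),
    (∀ k, a k ≠ 0 ∨ b k ≠ 0) → (∀ k, c k ≠ 0 ∨ d k ≠ 0) →
    ∀ lam : ℂ, lam ≠ 0 →
    ((∏ k, (C (a k) * X + C (b k))) = C lam * ∏ k, (C (c k) * X + C (d k))) →
    ∃ σ : Equiv.Perm (Fin r), ∀ k, ∃ e : ℂ, e ≠ 0 ∧ c (σ k) = e * a k ∧ d (σ k) = e * b k := by
  intro r a b c d hab hcd lam hlam hPQ
  classical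
  set P : ℂ[X] := ∏ k, (C (a k) * X + C (b k)) with hP
  set Q : ℂ[X] := ∏ k, (C (c k) * X + C (d k)) with hQ
  have hPne : ∀ k, C (a k) * X + C (b k) ≠ (0 : ℂ[X]) := fun k => linfac_ne_zero _ _ (hab k)
  have hQne : ∀ k, C (c k) * X + C (d k) ≠ (0 : ℂ[X]) := fun k => linfac_ne_zero _ _ (hcd k)
  have hP0 : P ≠ 0 := Finset.prod_ne_zero_iff.mpr (fun k _ => hPne k)
  have hQ0 : Q ≠ 0 := Finset.prod_ne_zero_iff.mpr (fun k _ => hQne k)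
  -- degrees
  have hdegP : P.natDegree = ∑ k, if a k = 0 then 0 else 1 := by
    rw [hP, Polynomial.natDegree_prod _ _ (fun k _ => hPne k)]
    exact Finset.sum_congr rfl (fun k _ => linfac_natDegree _ _)
  have hdegQ : Q.natDegree = ∑ k, if c k = 0 then 0 else 1 := by
    rw [hQ, Polynomial.natDegree_prod _ _ (fun k _ => hQne k)]
    exact Finset.sum_congr rfl (fun k _ => linfac_natDegree _ _)
  have hdegPQ : P.natDegree = Q.natDegree := by
    rw [hPQ, Polynomial.natDegree_C_mul hlam]
  -- roots
  have hrootsP : P.roots = Finset.univ.val.bind (fun k => (C (a k) * X + C (b k)).roots) :=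
    Polynomial.roots_prod _ _ hP0
  have hrootsQ : Q.roots = Finset.univ.val.bind (fun k => (C (c k) * X + C (d k)).roots) :=
    Polynomial.roots_prod _ _ hQ0
  have hrootsPQ : P.roots = Q.roots := by
    rw [hPQ, Polynomial.roots_C_mul _ hlam]
  -- slopes
  set s : Fin r → Option ℂ := fun k => if a k = 0 then none else some (-(b k) / a k) with hs
  set t : Fin r → Option ℂ := fun k => if c k = 0 then none else some (-(d k) / c k) with ht
  have key : ∀ (pr : Fin r → Prop) (_ : DecidablePred pr),
      Multiset.card (Multiset.filter pr Finset.univ.val) = ∑ k, if pr k then 1 else 0 := by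
    intro pr inst
    rw [← Finset.card_filter]
    rfl
  have hmap : Multiset.map s Finset.univ.val = Multiset.map t Finset.univ.val := by
    ext o
    rw [Multiset.count_map, Multiset.count_map, key _ _, key _ _]
    cases o with
    | none =>
      have hcount : ∀ (x y : Fin r → ℂ),
          (∑ k, if (none : Option ℂ) = (if x k = 0 then none else some (-(y k) / x k))
            then 1 else 0) + (∑ k, if x k = 0 then 0 else 1) = r := by
        intro x y
        rw [← Finset.sum_add_distrib]
        have h1 : ∀ k : Fin r,
            ((if (none : Option ℂ) = (if x k = 0 then none else some (-(y k) / x k))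
              then 1 else 0) + (if x k = 0 then 0 else 1)) = 1 := by
          intro k
          by_cases hx : x k = 0 <;> simp [hx]
        simp only [h1, Finset.sum_const, Finset.card_univ, Fintype.card_fin, smul_eq_mul,
          mul_one]
      have h1 := hcount a b
      have h2 := hcount c d
      rw [← hdegP] at h1
      rw [← hdegQ, ← hdegPQ] at h2
      simp only [hs, ht]
      omega
    | some z =>
      have hcount : ∀ (x y : Fin r → ℂ),
          (∑ k, if some z = (if x k = 0 then none else some (-(y k) / x k)) then 1 else 0)
          = Multiset.count z (Finset.univ.val.bind (fun k => (C (x k) * X + C (y k)).roots)) := by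
        intro x y
        rw [Multiset.count_bind]
        have hterm : (∑ k : Fin r,
              if some z = (if x k = 0 then none else some (-(y k) / x k)) then 1 else 0)
            = ∑ k : Fin r, Multiset.count z ((C (x k) * X + C (y k)).roots) := by
          refine Finset.sum_congr rfl (fun k _ => ?_)
          by_cases hx : x k = 0
          · simp [hx, Polynomial.roots_C]
          · rw [linfac_roots _ _ hx]
            simp only [hx, if_false]
            by_cases hz : z = -(y k) / x k
            · subst hz
              simp
            · rw [Multiset.count_singleton, if_neg hz, if_neg]
              simp only [Option.some_inj]
              exact fun h => hz h
        rw [hterm]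
        rfl
      simp only [hs, ht]
      rw [hcount a b, hcount c d, ← hrootsP, ← hrootsQ, hrootsPQ]
  obtain ⟨σ, hσ⟩ := exists_perm_of_map_eq' s t hmap
  refine ⟨σ, fun k => ?_⟩
  have hk := hσ k
  by_cases ha : a k = 0
  · have hb : b k ≠ 0 := (hab k).resolve_left (by simpa using ha)
    have hc : c (σ k) = 0 := by
      by_contra hc
      rw [hs, ht] at hk
      simp [hc, ha] at hk
    have hd : d (σ k) ≠ 0 := (hcd (σ k)).resolve_left (by simpa using hc)
    exact ⟨d (σ k) / b k, div_ne_zero hd hb, by rw [hc, ha, mul_zero],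
      (div_mul_cancel₀ (d (σ k)) hb).symm⟩
  · have hc : c (σ k) ≠ 0 := by
      intro hc
      rw [hs, ht] at hk
      simp [hc, ha] at hk
    have hslope : -(d (σ k)) / c (σ k) = -(b k) / a k := by
      rw [hs, ht] at hk
      simp only [ha, hc, if_false, Option.some_inj] at hk
      exact hk
    have h' := (div_eq_div_iff hc (by exact ha : a k ≠ 0)).mp hslope
    refine ⟨c (σ k) / a k, div_ne_zero hc ha, (div_mul_cancel₀ (c (σ k)) ha).symm, ?_⟩
    field_simp
    linear_combination -h'




/-- Identifiability of Hadamard products of collinear points: on a generic line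
`L = span{u, v}` in `ℙⁿ` with `r ≤ n`, if two `r`-fold coordinatewise products of
nonzero points of `L` agree up to a nonzero scalar, then the multisets of projective
points coincide. -/
theorem hadamard_products_collinear_identifiable (n r : ℕ) (hr : r ≤ n)
    (u v : Fin (n + 1) → ℂ)
    (hu : ∀ i, u i ≠ 0) (hv : ∀ i, v i ≠ 0)
    (hminor : ∀ i j : Fin (n + 1), i < j → u i * v j - u j * v i ≠ 0)
    (p q : Fin r → Fin (n + 1) → ℂ)
    (hpL : ∀ k, p k ∈ Submodule.span ℂ {u, v}) (hp0 : ∀ k, p k ≠ 0)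
    (hqL : ∀ k, q k ∈ Submodule.span ℂ {u, v}) (hq0 : ∀ k, q k ≠ 0)
    (lam : ℂ) (hlam : lam ≠ 0)
    (heq : ∏ k, p k = lam • ∏ k, q k) :
    ∃ σ : Equiv.Perm (Fin r), ∀ k, ∃ c : ℂ, c ≠ 0 ∧ q (σ k) = c • p k := by
  classical
  choose a b hab using fun k => Submodule.mem_span_pair.mp (hpL k)
  choose c d hcd using fun k => Submodule.mem_span_pair.mp (hqL k)
  have hab0 : ∀ k, a k ≠ 0 ∨ b k ≠ 0 := by
    intro k
    by_contra h
    push_neg at h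
    exact hp0 k (by rw [← hab k, h.1, h.2]; simp)
  have hcd0 : ∀ k, c k ≠ 0 ∨ d k ≠ 0 := by
    intro k
    by_contra h
    push_neg at h
    exact hq0 k (by rw [← hcd k, h.1, h.2]; simp)
  set P : ℂ[X] := ∏ k, (C (a k) * X + C (b k)) with hP
  set Q : ℂ[X] := ∏ k, (C (c k) * X + C (d k)) with hQ
  -- coordinatewise identity
  have hcoord : ∀ i, ∏ k, (a k * u i + b k * v i)
      = lam * ∏ k, (c k * u i + d k * v i) := by
    intro i
    have h1 := congrFun heq i
    rw [Finset.prod_apply, Pi.smul_apply, Finset.prod_apply, smul_eq_mul] at h1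
    have hpk : ∀ k, p k i = a k * u i + b k * v i := by
      intro k; rw [← hab k]; simp
    have hqk : ∀ k, q k i = c k * u i + d k * v i := by
      intro k; rw [← hcd k]; simp
    simp only [hpk, hqk] at h1
    exact h1
  -- evaluation of P at u i / v i
  have hevalgen : ∀ (x y : Fin r → ℂ) (i : Fin (n+1)),
      (v i)^r * (∏ k, (C (x k) * X + C (y k))).eval (u i / v i)
      = ∏ k, (x k * u i + y k * v i) := by
    intro x y i
    rw [Polynomial.eval_prod]
    rw [show (v i)^r = ∏ _k : Fin r, v i by
      rw [Finset.prod_const, Finset.card_univ, Fintype.card_fin]]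
    rw [← Finset.prod_mul_distrib]
    refine Finset.prod_congr rfl fun k _ => ?_
    simp only [Polynomial.eval_add, Polynomial.eval_mul, Polynomial.eval_C, Polynomial.eval_X]
    rw [mul_add]
    rw [show v i * (x k * (u i / v i)) = x k * u i from by
      rw [mul_comm (v i), mul_assoc, div_mul_cancel₀ _ (hv i)]]
    ring
  have heval : ∀ i : Fin (n+1), P.eval (u i / v i) = lam * Q.eval (u i / v i) := by
    intro i
    have h1 := hevalgen a b i
    have h2 := hevalgen c d i
    rw [← hP] at h1
    rw [← hQ] at h2
    have h3 : (v i)^r * P.eval (u i / v i) = (v i)^r * (lam * Q.eval (u i / v i)) := by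
      rw [h1, hcoord i, ← h2]; ring
    exact mul_left_cancel₀ (pow_ne_zero r (hv i)) h3
  -- injectivity of i ↦ u i / v i
  have hinj : Function.Injective (fun i : Fin (n+1) => u i / v i) := by
    intro i j hij
    by_contra hne
    have h' : u i * v j = u j * v i := (div_eq_div_iff (hv i) (hv j)).mp hij
    rcases lt_or_gt_of_ne hne with h | h
    · exact hminor i j h (by rw [h']; ring)
    · exact hminor j i h (by rw [h']; ring)
  -- degree bounds
  have hdegP : P.natDegree ≤ r := by
    rw [hP]
    refine le_trans (Polynomial.natDegree_prod_le _ _) ?_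
    refine le_trans (Finset.sum_le_sum (g := fun _ => 1)
      (fun k _ => Polynomial.natDegree_linear_le)) ?_
    simp
  have hdegQ : Q.natDegree ≤ r := by
    rw [hQ]
    refine le_trans (Polynomial.natDegree_prod_le _ _) ?_
    refine le_trans (Finset.sum_le_sum (g := fun _ => 1)
      (fun k _ => Polynomial.natDegree_linear_le)) ?_
    simp
  have hzero : P - C lam * Q = 0 := by
    apply Polynomial.eq_zero_of_natDegree_lt_card_of_eval_eq_zero _ hinj
    · intro i
      simp only [Polynomial.eval_sub, Polynomial.eval_mul, Polynomial.eval_C]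
      rw [heval i]
      ring
    · calc (P - C lam * Q).natDegree ≤ max P.natDegree (C lam * Q).natDegree :=
            Polynomial.natDegree_sub_le _ _
        _ ≤ r := by
            rw [Polynomial.natDegree_C_mul hlam]
            exact max_le hdegP hdegQ
        _ < Fintype.card (Fin (n+1)) := by
            rw [Fintype.card_fin]; omega
  have hPQ : P = C lam * Q := sub_eq_zero.mp hzero
  obtain ⟨σ, hσ⟩ := factor_match r a b c d hab0 hcd0 lam hlam hPQ
  refine ⟨σ, fun k => ?_⟩
  obtain ⟨e, he, h1, h2⟩ := hσ k
  refine ⟨e, he, ?_⟩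
  rw [← hcd (σ k), ← hab k, h1, h2]
  simp only [smul_add, smul_smul]
  try rw [mul_comm e (a k), mul_comm e (b k)]
end

section
/- Let Z be a set of m distinct points on a line L ⊂ P^n with r ≤ n, where L is spanned by two vectors with all coordinates and all 2×2 minors nonzero, and each point of Z has all coordinates nonzero. Then the square-free Hadamard power Z^{⋆̲r} = {p_1 ⋆ ... ⋆ p_r : p_i ∈ Z pairwise distinct} consists of exactly binomial(m, r) distinct points of P^n. -/
open Polynomial in
private lemma aux_poly_eval (m : ℕ) (a b : Fin m → ℂ) (s : Finset (Fin m)) (x y : ℂ)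
    (hy : y ≠ 0) :
    (∏ k ∈ s, (C (a k) * X + C (b k))).eval (x / y) * y ^ s.card =
      ∏ k ∈ s, (a k * x + b k * y) := by
  rw [Polynomial.eval_prod, ← Finset.prod_const, ← Finset.prod_mul_distrib]
  refine Finset.prod_congr rfl fun k _ => ?_
  simp only [Polynomial.eval_add, Polynomial.eval_mul, Polynomial.eval_C, Polynomial.eval_X]
  field_simp

/-- The square-free `r`-th Hadamard power of a set of `m` distinct points on a generic
line (no two zero coordinates on the line, no zero coordinates on the points) consists
of exactly `choose m r` distinct points of `ℙⁿ`. -/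
theorem squarefree_hadamard_power_card (n m r : ℕ) (hr : r ≤ n)
    (u v : Fin (n + 1) → ℂ)
    (hu : ∀ i, u i ≠ 0) (hv : ∀ i, v i ≠ 0)
    (hminor : ∀ i j : Fin (n + 1), i < j → u i * v j - u j * v i ≠ 0)
    (p : Fin m → Fin (n + 1) → ℂ)
    (hpL : ∀ k, p k ∈ Submodule.span ℂ {u, v})
    (hp0 : ∀ k i, p k i ≠ 0)
    (hdist : ∀ k l, k ≠ l → ∀ c : ℂ, p l ≠ c • p k) :
    {x : Projectivization ℂ (Fin (n + 1) → ℂ) |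
        ∃ s : Finset (Fin m), s.card = r ∧
          ∃ h : (∏ k ∈ s, p k) ≠ 0, x = Projectivization.mk ℂ (∏ k ∈ s, p k) h}.ncard =
      Nat.choose m r := by
  classical
  choose a b hab using fun k => (Submodule.mem_span_pair).1 (hpL k)
  -- coordinates of points
  have hcoord : ∀ k i, p k i = a k * u i + b k * v i := by
    intro k i
    rw [← hab k]; simp [mul_comm]
  -- nonzero coefficients facts
  have hab0 : ∀ k, a k = 0 → b k ≠ 0 := by
    intro k ha hb
    exact hp0 k 0 (by rw [hcoord k 0, ha, hb]; ring)
  -- products are nonzero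
  have hprodne : ∀ s : Finset (Fin m), (∏ k ∈ s, p k) ≠ 0 := by
    intro s h
    have h0 : (∏ k ∈ s, p k) 0 = 0 := by rw [h]; rfl
    rw [Finset.prod_apply] at h0
    exact (Finset.prod_ne_zero_iff.2 fun k _ => hp0 k 0) h0
  set f : Finset (Fin m) → Projectivization ℂ (Fin (n + 1) → ℂ) :=
    fun s => Projectivization.mk ℂ (∏ k ∈ s, p k) (hprodne s) with hf
  -- the set is the image of the r-subsets
  have hset : {x : Projectivization ℂ (Fin (n + 1) → ℂ) |
        ∃ s : Finset (Fin m), s.card = r ∧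
          ∃ h : (∏ k ∈ s, p k) ≠ 0, x = Projectivization.mk ℂ (∏ k ∈ s, p k) h} =
      ↑((Finset.powersetCard r (Finset.univ : Finset (Fin m))).image f) := by
    ext x
    simp only [Set.mem_setOf_eq, Finset.coe_image, Set.mem_image, Finset.mem_coe,
      Finset.mem_powersetCard_univ, hf]
    constructor
    · rintro ⟨s, hs, _, rfl⟩; exact ⟨s, hs, rfl⟩
    · rintro ⟨s, hs, rfl⟩; exact ⟨s, hs, hprodne s, rfl⟩
  rw [hset, Set.ncard_coe_finset]
  rw [Finset.card_image_of_injOn, Finset.card_powersetCard, Finset.card_univ, Fintype.card_fin]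
  -- injectivity
  intro s hs t ht hfst
  simp only [Finset.mem_coe, Finset.mem_powersetCard_univ] at hs ht
  by_contra hne
  rw [hf, Projectivization.mk_eq_mk_iff'] at hfst
  obtain ⟨c, hc⟩ := hfst
  have hc0 : c ≠ 0 := by
    rintro rfl
    exact hprodne s (by rw [← hc, zero_smul])
  -- coordinatewise identity
  have hcoordeq : ∀ i, ∏ k ∈ s, p k i = c * ∏ k ∈ t, p k i := by
    intro i
    have := congrFun hc i
    simpa [Finset.prod_apply] using this.symm
  -- polynomial identity
  open Polynomial in
  set P : ℂ[X] := ∏ k ∈ s, (C (a k) * X + C (b k)) with hP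
  set Q : ℂ[X] := ∏ k ∈ t, (C (a k) * X + C (b k)) with hQ
  have heval : ∀ i : Fin (n + 1), P.eval (u i / v i) = c * Q.eval (u i / v i) := by
    intro i
    have h1 := aux_poly_eval m a b s (u i) (v i) (hv i)
    have h2 := aux_poly_eval m a b t (u i) (v i) (hv i)
    have h3 : ∀ w : Finset (Fin m), ∏ k ∈ w, (a k * u i + b k * v i) = ∏ k ∈ w, p k i := by
      intro w; exact Finset.prod_congr rfl fun k _ => (hcoord k i).symm
    rw [h3] at h1 h2
    have hvpow : (v i) ^ r ≠ 0 := pow_ne_zero _ (hv i)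
    have hkey : P.eval (u i / v i) * v i ^ r = (c * Q.eval (u i / v i)) * v i ^ r := by
      rw [hs] at h1; rw [ht] at h2
      rw [h1, mul_assoc, h2]
      exact hcoordeq i
    exact mul_right_cancel₀ hvpow hkey
  -- the quotients u i / v i are pairwise distinct
  have hinj : Function.Injective (fun i : Fin (n + 1) => u i / v i) := by
    intro i j hij
    by_contra hne'
    rw [div_eq_div_iff (hv i) (hv j)] at hij
    have key : u i * v j - u j * v i = 0 := sub_eq_zero.2 hij
    rcases lt_or_gt_of_ne hne' with h | h
    · exact hminor i j h key
    · exact hminor j i h (by rw [← neg_eq_zero] at key; rw [← key]; ring)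
  -- P = C c * Q
  have hdegP : P.natDegree ≤ r := by
    rw [hP, ← hs]
    refine le_trans (Polynomial.natDegree_prod_le _ _) (le_trans
      (Finset.sum_le_card_nsmul s _ 1 fun k _ => Polynomial.natDegree_linear_le) (by simp))
  have hdegQ : Q.natDegree ≤ r := by
    rw [hQ, ← ht]
    refine le_trans (Polynomial.natDegree_prod_le _ _) (le_trans
      (Finset.sum_le_card_nsmul t _ 1 fun k _ => Polynomial.natDegree_linear_le) (by simp))
  have hPQ : P = C c * Q := by
    have hz : P - C c * Q = 0 := by
      apply Polynomial.eq_zero_of_natDegree_lt_card_of_eval_eq_zero _ hinj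
      · intro i
        simp [heval i]
      · calc (P - C c * Q).natDegree ≤ max P.natDegree (C c * Q).natDegree :=
              Polynomial.natDegree_sub_le _ _
          _ ≤ r := by
              refine max_le hdegP (le_trans (Polynomial.natDegree_mul_le) ?_)
              simpa using hdegQ
          _ < Fintype.card (Fin (n + 1)) := by
              rw [Fintype.card_fin]; omega
    linear_combination (norm := ring_nf) hz
  -- final contradiction: compare linear factors
  -- key sublemma: if two factors (one from s \ t, one from t, or vice versa) share a root
  have key : ∀ k l : Fin m, k ≠ l → a k ≠ 0 → a k * b l = a l * b k → False := by
    intro k l hkl hak hcross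
    apply hdist k l hkl (a l / a k)
    funext i
    rw [hcoord l i]
    simp only [Pi.smul_apply, smul_eq_mul, hcoord k i]
    rw [div_mul_eq_mul_div, eq_div_iff hak]
    linear_combination v i * hcross
  have hst : (s \ t).Nonempty := by
    rw [Finset.sdiff_nonempty]
    intro hsub
    exact hne (Finset.eq_of_subset_of_card_le hsub (by omega))
  have hts : (t \ s).Nonempty := by
    rw [Finset.sdiff_nonempty]
    intro hsub
    exact hne ((Finset.eq_of_subset_of_card_le hsub (by omega)).symm)
  by_cases hA : ∃ k ∈ s \ t, a k ≠ 0
  · obtain ⟨k, hkmem, hak⟩ := hA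
    obtain ⟨hks, hkt⟩ := Finset.mem_sdiff.1 hkmem
    set ρ : ℂ := -(b k) / a k with hρ
    have hProot : P.eval ρ = 0 := by
      rw [hP, Polynomial.eval_prod]
      refine Finset.prod_eq_zero hks ?_
      simp only [Polynomial.eval_add, Polynomial.eval_mul, Polynomial.eval_C, Polynomial.eval_X]
      rw [hρ]
      field_simp
      ring
    have hQroot : Q.eval ρ = 0 := by
      have := hProot
      rw [hPQ] at this
      simp only [Polynomial.eval_mul, Polynomial.eval_C] at this
      exact (mul_eq_zero.1 this).resolve_left hc0
    rw [hQ, Polynomial.eval_prod, Finset.prod_eq_zero_iff] at hQroot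
    obtain ⟨l, hlt, hl⟩ := hQroot
    simp only [Polynomial.eval_add, Polynomial.eval_mul, Polynomial.eval_C,
      Polynomial.eval_X] at hl
    have hkl : k ≠ l := fun h => hkt (h ▸ hlt)
    have hal : a l ≠ 0 := by
      intro h
      rw [h] at hl
      exact hab0 l h (by simpa using hl)
    apply key k l hkl hak
    have h' : (a l * (-(b k) / a k) + b l) * a k = 0 := by rw [hl, zero_mul]
    rw [add_mul, mul_assoc, div_mul_cancel₀ _ hak] at h'
    linear_combination h'
  · push_neg at hA
    by_cases hB : ∃ l ∈ t \ s, a l ≠ 0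
    · obtain ⟨l, hlmem, hal⟩ := hB
      obtain ⟨hlt, hls⟩ := Finset.mem_sdiff.1 hlmem
      set ρ : ℂ := -(b l) / a l with hρ
      have hQroot : Q.eval ρ = 0 := by
        rw [hQ, Polynomial.eval_prod]
        refine Finset.prod_eq_zero hlt ?_
        simp only [Polynomial.eval_add, Polynomial.eval_mul, Polynomial.eval_C, Polynomial.eval_X]
        rw [hρ]
        field_simp
        ring
      have hProot : P.eval ρ = 0 := by
        rw [hPQ]
        simp [hQroot]
      rw [hP, Polynomial.eval_prod, Finset.prod_eq_zero_iff] at hProot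
      obtain ⟨k, hks, hk⟩ := hProot
      simp only [Polynomial.eval_add, Polynomial.eval_mul, Polynomial.eval_C,
        Polynomial.eval_X] at hk
      have hkl : k ≠ l := fun h => hls (h ▸ hks)
      have hak : a k ≠ 0 := by
        intro h
        rw [h] at hk
        exact hab0 k h (by simpa using hk)
      apply key k l hkl hak
      have h' : (a k * (-(b l) / a l) + b k) * a l = 0 := by rw [hk, zero_mul]
      rw [add_mul, mul_assoc, div_mul_cancel₀ _ hal] at h'
      linear_combination -h'
    · push_neg at hB
      obtain ⟨k, hk⟩ := hst
      obtain ⟨l, hl⟩ := hts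
      have hak : a k = 0 := hA k hk
      have hal : a l = 0 := hB l hl
      have hkl : k ≠ l := fun h => (Finset.mem_sdiff.1 hk).2 (h ▸ (Finset.mem_sdiff.1 hl).1)
      apply hdist k l hkl (b l / b k)
      funext i
      rw [hcoord l i]
      simp only [Pi.smul_apply, smul_eq_mul, hcoord k i, hak, hal]
      have hbk : b k ≠ 0 := hab0 k hak
      rw [div_mul_eq_mul_div, eq_div_iff hbk]
      ring
end

section
/- Fix r ≤ n and let L = span{u, v} ⊂ C^{n+1} with all coordinates of u, v nonzero and all 2×2 minors of the matrix with rows u, v nonzero. Let p_1, ..., p_j ∈ L be nonzero vectors determining pairwise distinct projective points, each with all coordinates nonzero, and let H_i denote the subspace p_i ⋆ L^{⋆(r−1)} of C^{n+1}, where L^{⋆(r−1)} is the span of all (r−1)-fold coordinatewise products of elements of L. Then for j ≤ r, the intersection H_1 ∩ ... ∩ H_j equals p_1 ⋆ ... ⋆ p_j ⋆ L^{⋆(r−j)} and has dimension r−j+1, and for j = r+1 the intersection H_1 ∩ ... ∩ H_{r+1} is zero. -/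
/-- The span of all `k`-fold coordinatewise products of elements of a subspace `L`
(the `k`-th Hadamard power of `L`; for `k = 0` this is the span of the all-ones
vector, the empty product). -/
noncomputable def hadPowSpan {n : ℕ} (L : Submodule ℂ (Fin (n + 1) → ℂ)) (k : ℕ) :
    Submodule ℂ (Fin (n + 1) → ℂ) :=
  Submodule.span ℂ {w | ∃ v : Fin k → (Fin (n + 1) → ℂ), (∀ i, v i ∈ L) ∧ w = ∏ i, v i}


open Polynomial

noncomputable section StarAux

variable {n : ℕ}

/-- The evaluation map `q ↦ (m ↦ u m ^ k * q.eval (t m))`. -/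
def evalMap (u t : Fin (n + 1) → ℂ) (k : ℕ) : ℂ[X] →ₗ[ℂ] (Fin (n + 1) → ℂ) where
  toFun q := fun m => u m ^ k * q.eval (t m)
  map_add' q₁ q₂ := by funext m; simp [mul_add]
  map_smul' c q := by funext m; simp [smul_eq_mul]; ring

lemma evalMap_apply (u t : Fin (n + 1) → ℂ) (k : ℕ) (q : ℂ[X]) (m : Fin (n + 1)) :
    evalMap u t k q m = u m ^ k * q.eval (t m) := rfl

/-- membership helper -/
lemma mem_degreeLT_of_natDegree_lt {q : ℂ[X]} {m : ℕ} (h : q.natDegree < m) :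
    q ∈ degreeLT ℂ m := by
  rw [Polynomial.mem_degreeLT]
  exact lt_of_le_of_lt (degree_le_natDegree) (by exact_mod_cast h)

lemma natDegree_le_of_mem_degreeLT {q : ℂ[X]} {m : ℕ} (h : q ∈ degreeLT ℂ (m + 1)) :
    q.natDegree ≤ m := by
  rw [Polynomial.mem_degreeLT] at h
  by_cases hq : q = 0
  · simp [hq]
  · have := (natDegree_lt_iff_degree_lt hq).2 h
    omega

/-- Lemma A: identification of the Hadamard power span. -/
lemma hadPowSpan_eq (u v : Fin (n + 1) → ℂ) (hu : ∀ m, u m ≠ 0) (k : ℕ) :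
    hadPowSpan (Submodule.span ℂ {u, v}) k =
      (degreeLT ℂ (k + 1)).map (evalMap u (fun m => v m / u m) k) := by
  classical
  apply le_antisymm
  · rw [hadPowSpan, Submodule.span_le]
    rintro w ⟨f, hf, rfl⟩
    choose a b hab using fun i => Submodule.mem_span_pair.1 (hf i)
    refine ⟨∏ i, (C (a i) + C (b i) * X), ?_, ?_⟩
    · refine mem_degreeLT_of_natDegree_lt (lt_of_le_of_lt (natDegree_prod_le _ _) ?_)
      have h1 : ∀ i : Fin k, (C (a i) + C (b i) * X).natDegree ≤ 1 := fun i => by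
        rw [add_comm]
        exact natDegree_linear_le
      have h2 : (∑ i : Fin k, (C (a i) + C (b i) * X).natDegree) ≤ k := by
        have := Finset.sum_le_sum (s := Finset.univ)
          (f := fun i : Fin k => (C (a i) + C (b i) * X).natDegree)
          (g := fun _ => 1) (fun i _ => h1 i)
        simpa using this
      omega
    · funext m
      rw [evalMap_apply, eval_prod, Finset.prod_apply]
      have hk : u m ^ k = ∏ _i : Fin k, u m := by
        rw [Finset.prod_const, Finset.card_univ, Fintype.card_fin]
      rw [hk, ← Finset.prod_mul_distrib]
      refine Finset.prod_congr rfl fun i _ => ?_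
      have hfm : f i m = a i * u m + b i * v m := by
        have := congrFun (hab i) m
        simpa [Pi.add_apply, Pi.smul_apply, smul_eq_mul] using this.symm
      rw [hfm]
      simp only [eval_add, eval_C, eval_mul, eval_X]
      field_simp [hu m]
  · rw [degreeLT_eq_span_X_pow, Submodule.map_span, Submodule.span_le]
    rintro w ⟨q, hq, rfl⟩
    simp only [Finset.coe_image, Set.mem_image, Finset.mem_coe, Finset.mem_range] at hq
    obtain ⟨a, ha, rfl⟩ := hq
    have hak : a ≤ k := Nat.lt_succ_iff.1 ha
    apply Submodule.subset_span
    refine ⟨fun i : Fin k => if (i : ℕ) < k - a then u else v, fun i => ?_, ?_⟩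
    · by_cases h : (i : ℕ) < k - a <;> simp only [h, if_true, if_false] <;>
        exact Submodule.subset_span (by simp)
    · funext m
      rw [evalMap_apply, Finset.prod_apply]
      have : (∏ i : Fin k, (if (i : ℕ) < k - a then u else v) m) =
          ∏ i ∈ Finset.range k, (if i < k - a then u m else v m) := by
        rw [← Fin.prod_univ_eq_prod_range]
        refine Finset.prod_congr rfl fun i _ => ?_
        by_cases h : (i : ℕ) < k - a <;> simp [h]
      rw [this, ← Finset.prod_range_mul_prod_Ico _ (Nat.sub_le k a)]
      have h1 : (∏ i ∈ Finset.range (k - a), (if i < k - a then u m else v m)) =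
          u m ^ (k - a) := by
        rw [Finset.prod_congr rfl fun i hi => if_pos (Finset.mem_range.1 hi),
          Finset.prod_const, Finset.card_range]
      have h2 : (∏ i ∈ Finset.Ico (k - a) k, (if i < k - a then u m else v m)) =
          v m ^ a := by
        rw [Finset.prod_congr rfl fun i hi => if_neg (by
            have := (Finset.mem_Ico.1 hi).1; omega),
          Finset.prod_const, Nat.card_Ico]
        congr 1
        omega
      rw [h1, h2, eval_pow, eval_X]
      have hpow : u m ^ k = u m ^ (k - a) * u m ^ a := by
        rw [← pow_add]; congr 1; omega
      rw [hpow, mul_right_comm, div_pow, mul_assoc,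
        div_mul_cancel₀ _ (pow_ne_zero a (hu m))]

/-- Lemma B: injectivity of `evalMap` on `degreeLT (r+1)` for `r ≤ n`. -/
lemma evalMap_inj (u t : Fin (n + 1) → ℂ) (hu : ∀ m, u m ≠ 0)
    (ht : Function.Injective t) {r : ℕ} (hrn : r ≤ n) {q : ℂ[X]}
    (hq : q ∈ degreeLT ℂ (r + 1)) (h0 : evalMap u t r q = 0) : q = 0 := by
  have hdeg : q.natDegree < Fintype.card (Fin (n + 1)) := by
    have := natDegree_le_of_mem_degreeLT hq
    simp only [Fintype.card_fin]
    omega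
  refine Polynomial.eq_zero_of_natDegree_lt_card_of_eval_eq_zero q ht (fun m => ?_) hdeg
  have := congrFun h0 m
  rw [evalMap_apply] at this
  simp only [Pi.zero_apply] at this
  exact (mul_eq_zero.1 this).resolve_left (pow_ne_zero _ (hu m))

section Poly

variable {j r : ℕ} (hj : 1 ≤ j) (hr : 1 ≤ r) (l : Fin j → ℂ[X])
  (hl0 : ∀ i, l i ≠ 0) (hdeg : ∀ i, (l i).natDegree ≤ 1)
  (hcop : ∀ i i', i ≠ i' → IsCoprime (l i) (l i'))
  (honec : ∀ i i', i ≠ i' → (l i).natDegree = 0 → (l i').natDegree = 1)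

include hj hr hl0 hdeg hcop honec in
/-- Core divisibility/degree fact about the polynomial intersection. -/
lemma poly_core {w : ℂ[X]}
    (hw : w ∈ ⨅ i, (degreeLT ℂ r).map (LinearMap.mulLeft ℂ (l i))) (hw0 : w ≠ 0) :
    ∃ q : ℂ[X], w = (∏ i, l i) * q ∧ q ≠ 0 ∧ q.natDegree + j ≤ r := by
  classical
  have hmem : ∀ i, ∃ qi, qi ∈ degreeLT ℂ r ∧ l i * qi = w := by
    intro i
    have h1 := (Submodule.mem_iInf _).1 hw i
    obtain ⟨qi, hqi, hqi2⟩ := Submodule.mem_map.1 h1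
    exact ⟨qi, hqi, by simpa [LinearMap.mulLeft_apply] using hqi2⟩
  choose qi hqi hmul using hmem
  have hdvd : (∏ i, l i) ∣ w := by
    refine Finset.prod_dvd_of_coprime ?_ (fun i _ => ⟨qi i, (hmul i).symm⟩)
    intro i _ i' _ hne
    exact hcop i i' hne
  obtain ⟨q, rfl⟩ := hdvd
  have hprod0 : (∏ i, l i) ≠ 0 := Finset.prod_ne_zero_iff.2 fun i _ => hl0 i
  have hq0 : q ≠ 0 := fun h => hw0 (by rw [h, mul_zero])
  have hi0 : ∃ i0 : Fin j, ∀ i, i ≠ i0 → (l i).natDegree = 1 := by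
    by_cases hex : ∃ i0, (l i0).natDegree = 0
    · obtain ⟨i0, h0⟩ := hex
      exact ⟨i0, fun i hi => honec i0 i (Ne.symm hi) h0⟩
    · push_neg at hex
      exact ⟨⟨0, hj⟩, fun i _ => le_antisymm (hdeg i) (Nat.one_le_iff_ne_zero.2 (hex i))⟩
  obtain ⟨i0, hi0⟩ := hi0
  have hD : (∏ i, l i).natDegree = (l i0).natDegree + (j - 1) := by
    rw [natDegree_prod _ _ (fun i _ => hl0 i),
      ← Finset.add_sum_erase _ _ (Finset.mem_univ i0)]
    congr 1
    rw [Finset.sum_congr rfl (fun i hi => hi0 i (Finset.ne_of_mem_erase hi))]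
    simp [Finset.card_erase_of_mem]
  have hqi0 : (qi i0).natDegree ≤ r - 1 := by
    have : qi i0 ∈ degreeLT ℂ ((r - 1) + 1) := by
      rw [Nat.sub_add_cancel hr]; exact hqi i0
    exact natDegree_le_of_mem_degreeLT this
  have hqi0ne : qi i0 ≠ 0 := by
    intro h
    have h2 := hmul i0
    rw [h, mul_zero] at h2
    exact hw0 h2.symm
  have heq : (l i0).natDegree + (qi i0).natDegree =
      (∏ i, l i).natDegree + q.natDegree := by
    rw [← natDegree_mul (hl0 i0) hqi0ne, ← natDegree_mul hprod0 hq0, hmul i0]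
  exact ⟨q, rfl, hq0, by omega⟩

include hj hr hl0 hdeg hcop honec in
lemma poly_iInf_eq (hjr : j ≤ r) :
    (⨅ i, (degreeLT ℂ r).map (LinearMap.mulLeft ℂ (l i))) =
      (degreeLT ℂ (r - j + 1)).map (LinearMap.mulLeft ℂ (∏ i, l i)) := by
  classical
  apply le_antisymm
  · intro w hw
    by_cases hw0 : w = 0
    · rw [hw0]; exact Submodule.zero_mem _
    · obtain ⟨q, rfl, hq0, hqd⟩ := poly_core hj hr l hl0 hdeg hcop honec hw hw0
      exact ⟨q, mem_degreeLT_of_natDegree_lt (by omega), by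
        simp [LinearMap.mulLeft_apply]⟩
  · refine le_iInf fun i => ?_
    rintro w ⟨q, hq, rfl⟩
    have hqd : q.natDegree ≤ r - j := natDegree_le_of_mem_degreeLT hq
    refine ⟨(∏ k ∈ Finset.univ.erase i, l k) * q, ?_, ?_⟩
    · have h1 : ((∏ k ∈ Finset.univ.erase i, l k) * q).natDegree ≤
          (∏ k ∈ Finset.univ.erase i, l k).natDegree + q.natDegree :=
        natDegree_mul_le
      have h2 : (∏ k ∈ Finset.univ.erase i, l k).natDegree ≤ j - 1 := by
        refine le_trans (natDegree_prod_le _ _) ?_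
        have := Finset.sum_le_sum (s := Finset.univ.erase i)
          (f := fun k => (l k).natDegree) (g := fun _ => 1) (fun k _ => hdeg k)
        simpa [Finset.card_erase_of_mem] using this
      exact mem_degreeLT_of_natDegree_lt (by omega)
    · simp only [LinearMap.mulLeft_apply]
      rw [← mul_assoc, Finset.mul_prod_erase _ _ (Finset.mem_univ i)]

include hj hr hl0 hdeg hcop honec in
lemma poly_iInf_eq_bot (hjr : j = r + 1) :
    (⨅ i, (degreeLT ℂ r).map (LinearMap.mulLeft ℂ (l i))) = ⊥ := by
  rw [eq_bot_iff]
  intro w hw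
  by_contra hw0
  have hw0' : w ≠ 0 := fun h => hw0 (by simp [h])
  obtain ⟨q, _, _, hqd⟩ := poly_core hj hr l hl0 hdeg hcop honec hw hw0'
  omega

end Poly

/-- Exchange `⨅` and `map` for a map injective on a common over-submodule. -/
lemma iInf_map_eq_map_iInf {ι : Type*} [Nonempty ι]
    (E : ℂ[X] →ₗ[ℂ] (Fin (n + 1) → ℂ)) (D : Submodule ℂ ℂ[X])
    (M : ι → Submodule ℂ ℂ[X]) (hM : ∀ i, M i ≤ D)
    (hinj : ∀ q ∈ D, E q = 0 → q = 0) :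
    (⨅ i, (M i).map E) = (⨅ i, M i).map E := by
  apply le_antisymm
  · intro w hw
    have h1 : ∀ i, ∃ q, q ∈ M i ∧ E q = w := by
      intro i
      exact Submodule.mem_map.1 ((Submodule.mem_iInf _).1 hw i)
    choose q hq hEq using h1
    set i0 := Classical.arbitrary ι
    have key : ∀ i, q i = q i0 := by
      intro i
      have h2 : E (q i - q i0) = 0 := by rw [map_sub, hEq i, hEq i0, sub_self]
      have h3 : q i - q i0 ∈ D := Submodule.sub_mem D (hM i (hq i)) (hM i0 (hq i0))
      exact sub_eq_zero.1 (hinj _ h3 h2)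
    exact ⟨q i0, (Submodule.mem_iInf _).2 fun i => by rw [← key i]; exact hq i, hEq i0⟩
  · exact le_iInf fun i => Submodule.map_mono (iInf_le _ i)

/-- If the determinant of two nonzero pairs vanishes, they are proportional. -/
lemma exists_ratio {a b a' b' : ℂ} (h : ¬(a = 0 ∧ b = 0))
    (hd : a * b' - a' * b = 0) : ∃ c, a' = c * a ∧ b' = c * b := by
  by_cases hb : b = 0
  · have ha : a ≠ 0 := fun h0 => h ⟨h0, hb⟩
    have hb' : b' = 0 := by
      have h1 : a * b' = 0 := by rw [hb] at hd; simpa using hd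
      exact (mul_eq_zero.1 h1).resolve_left ha
    exact ⟨a' / a, by field_simp, by rw [hb, hb', mul_zero]⟩
  · have hab : a * b' = a' * b := by rw [← sub_eq_zero]; exact hd
    refine ⟨b' / b, ?_, by field_simp⟩
    field_simp
    linear_combination -hab

lemma finrank_degreeLT (m : ℕ) :
    Module.finrank ℂ (degreeLT ℂ m) = m := by
  rw [(Polynomial.degreeLTEquiv ℂ m).finrank_eq]
  exact Module.finrank_fin_fun ℂ

end StarAux

/-- Linear general position of the hyperplanes `Hᵢ = pᵢ ⋆ L^{⋆(r-1)}` inside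
`L^{⋆r}`, for distinct collinear points `p₁, …, p_j` on a generic line `L`:
if `j ≤ r` then `H₁ ∩ … ∩ H_j = p₁ ⋆ ⋯ ⋆ p_j ⋆ L^{⋆(r-j)}`, of dimension
`r - j + 1`, and if `j = r + 1` the intersection is zero. -/
theorem hadamard_hyperplanes_general_position (n r j : ℕ) (hr : 1 ≤ r) (hrn : r ≤ n)
    (hj : 1 ≤ j)
    (u v : Fin (n + 1) → ℂ)
    (hu : ∀ i, u i ≠ 0) (hv : ∀ i, v i ≠ 0)
    (hminor : ∀ i k : Fin (n + 1), i < k → u i * v k - u k * v i ≠ 0)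
    (p : Fin j → Fin (n + 1) → ℂ)
    (hpL : ∀ i, p i ∈ Submodule.span ℂ {u, v})
    (hp0 : ∀ i k, p i k ≠ 0)
    (hdist : ∀ i i', i ≠ i' → ∀ c : ℂ, p i' ≠ c • p i) :
    (j ≤ r →
      (⨅ i, (hadPowSpan (Submodule.span ℂ {u, v}) (r - 1)).map
          (LinearMap.mulLeft ℂ (p i))) =
        (hadPowSpan (Submodule.span ℂ {u, v}) (r - j)).map
          (LinearMap.mulLeft ℂ (∏ i, p i)) ∧
      Module.finrank ℂ ↥(⨅ i, (hadPowSpan (Submodule.span ℂ {u, v}) (r - 1)).map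
          (LinearMap.mulLeft ℂ (p i))) = r - j + 1) ∧
    (j = r + 1 →
      (⨅ i, (hadPowSpan (Submodule.span ℂ {u, v}) (r - 1)).map
          (LinearMap.mulLeft ℂ (p i))) = ⊥) := by
  classical
  haveI : Nonempty (Fin j) := ⟨⟨0, hj⟩⟩
  obtain ⟨r', rfl⟩ : ∃ r', r = r' + 1 := ⟨r - 1, by omega⟩
  set t : Fin (n + 1) → ℂ := fun m => v m / u m with ht_def
  -- injectivity of t
  have htinj : Function.Injective t := by
    intro m m' h
    by_contra hne
    have key : ∀ x y : Fin (n + 1), x < y → v x / u x ≠ v y / u y := by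
      intro x y hxy hEq
      rw [div_eq_div_iff (hu x) (hu y)] at hEq
      exact hminor x y hxy (by rw [sub_eq_zero]; linear_combination -hEq)
    rcases lt_or_gt_of_ne hne with hlt | hlt
    · exact key m m' hlt h
    · exact key m' m hlt h.symm
  -- coefficients of the points
  choose a b hab using fun i => Submodule.mem_span_pair.1 (hpL i)
  set l : Fin j → Polynomial ℂ := fun i => C (a i) + C (b i) * X with hl_def
  -- pointwise identity
  have hlp : ∀ i m, u m * (l i).eval (t m) = p i m := by
    intro i m
    have h1 := congrFun (hab i) m
    simp only [Pi.add_apply, Pi.smul_apply, smul_eq_mul] at h1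
    simp only [hl_def, eval_add, eval_C, eval_mul, eval_X, ht_def]
    rw [← h1]
    field_simp [hu m]
  have hleval : ∀ i m, (l i).eval (t m) ≠ 0 := by
    intro i m h
    exact hp0 i m (by rw [← hlp i m, h, mul_zero])
  have hl0 : ∀ i, l i ≠ 0 := fun i h => hleval i 0 (by rw [h, eval_zero])
  have hldeg : ∀ i, (l i).natDegree ≤ 1 := by
    intro i
    rw [hl_def]
    simpa [add_comm] using (natDegree_linear_le (a := b i) (b := a i))
  -- nonvanishing determinants
  have hDelta : ∀ i i', i ≠ i' → a i * b i' - a i' * b i ≠ 0 := by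
    intro i i' hne hd
    have hne0 : ¬(a i = 0 ∧ b i = 0) := by
      rintro ⟨h1, h2⟩
      apply hp0 i 0
      rw [← hab i, h1, h2]
      simp
    obtain ⟨c, hc1, hc2⟩ := exists_ratio hne0 hd
    apply hdist i i' hne c
    rw [← hab i', ← hab i, hc1, hc2]
    funext m
    simp only [Pi.add_apply, Pi.smul_apply, smul_eq_mul]
    ring
  -- coprimality
  have hcop : ∀ i i', i ≠ i' → IsCoprime (l i) (l i') := by
    intro i i' hne
    set d : ℂ := a i * b i' - a i' * b i with hd_def
    have hd := hDelta i i' hne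
    refine ⟨C (b i' / d), C (-(b i) / d), ?_⟩
    have hd' : d ≠ 0 := hd
    have e1 : b i' / d * a i + -(b i) / d * a i' = 1 := by
      field_simp
      rw [hd_def]; ring
    have e2 : b i' / d * b i + -(b i) / d * b i' = 0 := by field_simp; ring
    have expand : C (b i' / d) * l i + C (-(b i) / d) * l i' =
        C (b i' / d * a i + -(b i) / d * a i') +
          C (b i' / d * b i + -(b i) / d * b i') * X := by
      simp only [hl_def, map_add, map_mul]
      ring
    rw [expand, e1, e2]
    simp
  -- at most one constant
  have honec : ∀ i i', i ≠ i' → (l i).natDegree = 0 → (l i').natDegree = 1 := by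
    intro i i' hne h0
    have hbi : b i = 0 := by
      by_contra hb
      have hli : l i = C (b i) * X + C (a i) := by rw [hl_def]; ring
      have : (l i).natDegree = 1 := by rw [hli]; exact natDegree_linear hb
      omega
    have hbi' : b i' ≠ 0 := by
      intro hb'
      exact hDelta i i' hne (by rw [hbi, hb', mul_zero, mul_zero, sub_zero])
    have hli' : l i' = C (b i') * X + C (a i') := by rw [hl_def]; ring
    rw [hli']
    exact natDegree_linear hbi'
  -- span identification
  have hspan : ∀ k, hadPowSpan (Submodule.span ℂ {u, v}) k =
      (degreeLT ℂ (k + 1)).map (evalMap u t k) := fun k => hadPowSpan_eq u v hu k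
  -- composition identities
  have hcomp1 : ∀ i, (LinearMap.mulLeft ℂ (p i)) ∘ₗ (evalMap u t r') =
      (evalMap u t (r' + 1)) ∘ₗ (LinearMap.mulLeft ℂ (l i)) := by
    intro i
    apply LinearMap.ext
    intro q
    funext m
    simp only [LinearMap.comp_apply, LinearMap.mulLeft_apply, Pi.mul_apply,
      evalMap_apply, eval_mul]
    rw [← hlp i m, pow_succ]
    ring
  have hHi : ∀ i, (hadPowSpan (Submodule.span ℂ {u, v}) r').map (LinearMap.mulLeft ℂ (p i)) =
      ((degreeLT ℂ (r' + 1)).map (LinearMap.mulLeft ℂ (l i))).map (evalMap u t (r' + 1)) := by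
    intro i
    rw [hspan r', ← Submodule.map_comp, hcomp1 i, Submodule.map_comp]
  have hMD : ∀ i, (degreeLT ℂ (r' + 1)).map (LinearMap.mulLeft ℂ (l i)) ≤
      degreeLT ℂ (r' + 2) := by
    intro i w hw
    obtain ⟨q, hq, rfl⟩ := Submodule.mem_map.1 hw
    simp only [LinearMap.mulLeft_apply]
    apply mem_degreeLT_of_natDegree_lt
    have h1 : (l i * q).natDegree ≤ (l i).natDegree + q.natDegree := natDegree_mul_le
    have h2 : q.natDegree ≤ r' := natDegree_le_of_mem_degreeLT hq
    have h3 := hldeg i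
    omega
  have hinjD : ∀ q ∈ degreeLT ℂ (r' + 2), evalMap u t (r' + 1) q = 0 → q = 0 := by
    intro q hq h0
    exact evalMap_inj u t hu htinj hrn hq h0
  have hiInf : (⨅ i, (hadPowSpan (Submodule.span ℂ {u, v}) r').map
        (LinearMap.mulLeft ℂ (p i))) =
      (⨅ i, (degreeLT ℂ (r' + 1)).map (LinearMap.mulLeft ℂ (l i))).map
        (evalMap u t (r' + 1)) := by
    rw [iInf_congr hHi]
    exact iInf_map_eq_map_iInf _ (degreeLT ℂ (r' + 2)) _ hMD hinjD
  have hprodld : (∏ i, l i).natDegree ≤ j := by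
    refine le_trans (natDegree_prod_le _ _) ?_
    have h1 := Finset.sum_le_sum (s := Finset.univ)
      (f := fun i : Fin j => (l i).natDegree) (g := fun _ => 1) (fun i _ => hldeg i)
    simpa using h1
  have hprodl0 : (∏ i, l i) ≠ 0 := Finset.prod_ne_zero_iff.2 fun i _ => hl0 i
  refine ⟨fun hjr => ?_, fun hjr => ?_⟩
  · -- case j ≤ r
    have hcomp2 : (LinearMap.mulLeft ℂ (∏ i, p i)) ∘ₗ (evalMap u t (r' + 1 - j)) =
        (evalMap u t (r' + 1)) ∘ₗ (LinearMap.mulLeft ℂ (∏ i, l i)) := by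
      apply LinearMap.ext
      intro q
      funext m
      simp only [LinearMap.comp_apply, LinearMap.mulLeft_apply, Pi.mul_apply,
        evalMap_apply, eval_mul, eval_prod, Finset.prod_apply]
      have hppm : ∏ i, p i m = u m ^ j * ∏ i, (l i).eval (t m) := by
        calc ∏ i, p i m = ∏ i, (u m * (l i).eval (t m)) :=
              Finset.prod_congr rfl fun i _ => (hlp i m).symm
          _ = (∏ _i : Fin j, u m) * ∏ i, (l i).eval (t m) := Finset.prod_mul_distrib
          _ = u m ^ j * ∏ i, (l i).eval (t m) := by
              rw [Finset.prod_const, Finset.card_univ, Fintype.card_fin]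
      have hpow : u m ^ j * u m ^ (r' + 1 - j) = u m ^ (r' + 1) := by
        rw [← pow_add]
        congr 1
        omega
      rw [hppm, ← hpow]
      ring
    have hpoly := poly_iInf_eq hj hr l hl0 hldeg hcop honec hjr
    constructor
    · simp only [Nat.add_sub_cancel]
      rw [hiInf, hpoly, hspan (r' + 1 - j), ← Submodule.map_comp, ← Submodule.map_comp,
        hcomp2]
    · show Module.finrank ℂ
          ↥(⨅ i, (hadPowSpan (Submodule.span ℂ {u, v}) r').map
            (LinearMap.mulLeft ℂ (p i))) = r' + 1 - j + 1
      rw [hiInf, hpoly, ← Submodule.map_comp]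
      have hrange : (degreeLT ℂ (r' + 1 - j + 1)).map
            ((evalMap u t (r' + 1)) ∘ₗ (LinearMap.mulLeft ℂ (∏ i, l i))) =
          LinearMap.range (((evalMap u t (r' + 1)) ∘ₗ (LinearMap.mulLeft ℂ (∏ i, l i))) ∘ₗ
            (degreeLT ℂ (r' + 1 - j + 1)).subtype) := by
        rw [LinearMap.range_comp, Submodule.range_subtype]
      have hFinj : Function.Injective
          (((evalMap u t (r' + 1)) ∘ₗ (LinearMap.mulLeft ℂ (∏ i, l i))) ∘ₗ
            (degreeLT ℂ (r' + 1 - j + 1)).subtype) := by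
        rw [← LinearMap.ker_eq_bot]
        apply LinearMap.ker_eq_bot'.2
        rintro ⟨q, hq⟩ hq0
        have h1 : evalMap u t (r' + 1) ((∏ i, l i) * q) = 0 := by
          simpa [LinearMap.comp_apply, LinearMap.mulLeft_apply] using hq0
        have hqd : q.natDegree ≤ r' + 1 - j := natDegree_le_of_mem_degreeLT hq
        have hmem : (∏ i, l i) * q ∈ degreeLT ℂ (r' + 2) := by
          apply mem_degreeLT_of_natDegree_lt
          have h2 : ((∏ i, l i) * q).natDegree ≤ (∏ i, l i).natDegree + q.natDegree :=
            natDegree_mul_le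
          omega
        have h3 := hinjD _ hmem h1
        have h4 : q = 0 := (mul_eq_zero.1 h3).resolve_left hprodl0
        exact Subtype.ext h4
      rw [hrange, LinearMap.finrank_range_of_inj hFinj, finrank_degreeLT]
  · -- case j = r + 1
    simp only [Nat.add_sub_cancel]
    rw [hiInf, poly_iInf_eq_bot hj hr l hl0 hldeg hcop honec hjr, Submodule.map_bot]
end

section
/- Let Z be a set of m points on a line L in P^n, with r ≤ min{m, n}, such that no point of L has two or more zero coordinates and no point of Z has a zero coordinate. Then Z^{⋆̲r}, the set of Hadamard products of r distinct points of Z, is a star configuration in the linear space M = L^{⋆r}: there are m hyperplanes H_1, ..., H_m of M (namely H_i = p_i ⋆ L^{⋆(r−1)} for Z = {p_1,...,p_m}) in linear general position in M such that Z^{⋆̲r} is exactly the union over all 1 ≤ i_1 < ... < i_r ≤ m of the intersection points H_{i_1} ∩ ... ∩ H_{i_r}. -/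
open Polynomial

noncomputable def phiL {n : ℕ} (u v : Fin (n+1) → ℂ) (d : ℕ) :
    Polynomial ℂ →ₗ[ℂ] (Fin (n+1) → ℂ) :=
  LinearMap.pi fun k => (v k ^ d) • Polynomial.leval (u k / v k)

lemma phiL_apply {n : ℕ} (u v : Fin (n+1) → ℂ) (d : ℕ) (q : ℂ[X]) (k : Fin (n+1)) :
    phiL u v d q k = v k ^ d * q.eval (u k / v k) := rfl

lemma mem_dLT {q : ℂ[X]} {k : ℕ} (hq : q.natDegree < k) : q ∈ degreeLT ℂ k :=
  mem_degreeLT.2 (lt_of_le_of_lt degree_le_natDegree (by exact_mod_cast hq))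

lemma hadPow_eq {n : ℕ} (u v : Fin (n+1) → ℂ) (hv : ∀ k, v k ≠ 0) (d : ℕ) :
    hadPowSpan (Submodule.span ℂ {u, v}) d
      = (degreeLT ℂ (d+1)).map (phiL u v d) := by
  apply le_antisymm
  · rw [hadPowSpan, Submodule.span_le]
    rintro w ⟨f, hf, rfl⟩
    have hx : ∀ i, ∃ a b : ℂ, a • u + b • v = f i := fun i =>
      Submodule.mem_span_pair.1 (hf i)
    choose a b hab using hx
    refine ⟨∏ i : Fin d, (C (a i) * X + C (b i)), ?_, ?_⟩
    · apply mem_dLT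
      calc (∏ i : Fin d, (C (a i) * X + C (b i))).natDegree
          ≤ ∑ i : Fin d, (C (a i) * X + C (b i)).natDegree := natDegree_prod_le _ _
        _ ≤ ∑ _i : Fin d, 1 :=
            Finset.sum_le_sum (f := fun i : Fin d => (C (a i) * X + C (b i)).natDegree)
              (g := fun _ => 1) (fun i _ => natDegree_linear_le)
        _ < d + 1 := by simp
    · funext k
      rw [phiL_apply]
      have h1 : v k ^ d = ∏ _i : Fin d, v k := by simp
      rw [eval_prod, h1, ← Finset.prod_mul_distrib]
      rw [show (∏ i : Fin d, f i) k = ∏ i : Fin d, f i k from Finset.prod_apply _ _ _]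
      refine Finset.prod_congr rfl fun i _ => ?_
      rw [← hab i]
      simp only [Pi.add_apply, Pi.smul_apply, smul_eq_mul, eval_add, eval_mul, eval_C, eval_X]
      rw [mul_add, mul_comm (v k) (a i * (u k / v k)), mul_assoc,
        div_mul_cancel₀ _ (hv k), mul_comm (v k) (b i)]
  · rintro w ⟨q, hq, rfl⟩
    have hdeg : q.natDegree < d + 1 := by
      by_cases h0 : q = 0
      · simp [h0]
      · exact (natDegree_lt_iff_degree_lt h0).2 (mem_degreeLT.1 hq)
    have hrepr := Polynomial.as_sum_range' q (d+1) hdeg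
    have : phiL u v d q = ∑ i ∈ Finset.range (d+1), q.coeff i • phiL u v d (X ^ i) := by
      conv_lhs => rw [hrepr]
      rw [map_sum]
      refine Finset.sum_congr rfl fun i _ => ?_
      rw [← smul_X_eq_monomial, map_smul]
    rw [this]
    apply Submodule.sum_mem
    intro i hi
    apply Submodule.smul_mem
    have hi' : i ≤ d := Nat.lt_succ_iff.1 (Finset.mem_range.1 hi)
    -- phiL (X^i) = pointwise u^i * v^(d-i), a product of d elements of L
    apply Submodule.subset_span
    refine ⟨fun j : Fin d => if (j : ℕ) < i then u else v, ?_, ?_⟩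
    · intro j
      by_cases h : (j : ℕ) < i <;> simp [h] <;>
        exact Submodule.subset_span (by simp)
    · funext k
      rw [phiL_apply]
      rw [show (∏ j : Fin d, if (j:ℕ) < i then u else v) k
            = ∏ j : Fin d, (if (j:ℕ) < i then u else v) k from Finset.prod_apply _ _ _]
      have h2 : ∀ j : Fin d, (if (j:ℕ) < i then u else v) k
          = if (j:ℕ) < i then u k else v k := by
        intro j; by_cases h : (j:ℕ) < i <;> simp [h]
      simp only [h2]
      rw [Fin.prod_univ_eq_prod_range (fun j => if j < i then u k else v k) d]
      have hsplit : ∏ j ∈ Finset.range d, (if j < i then u k else v k)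
          = (∏ j ∈ Finset.range i, u k) * ∏ j ∈ Finset.Ico i d, v k := by
        rw [Finset.range_eq_Ico, ← Finset.prod_Ico_consecutive _ (Nat.zero_le i) hi']
        rw [← Finset.range_eq_Ico]
        congr 1
        · exact Finset.prod_congr rfl fun j hj => by simp [Finset.mem_range.1 hj]
        · exact Finset.prod_congr rfl fun j hj => by
            simp [not_lt.2 (Finset.mem_Ico.1 hj).1]
      rw [hsplit]
      simp only [Finset.prod_const, Finset.card_range, Nat.card_Ico, eval_pow, eval_X]
      field_simp
      have hvd : v k ^ d = v k ^ i * v k ^ (d - i) := by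
        rw [← pow_add]; congr 1; omega
      rw [hvd, div_pow, mul_comm (v k ^ i), mul_assoc, mul_div_assoc',
        mul_div_cancel_left₀ _ (pow_ne_zero i (hv k)), mul_comm]

lemma natDeg_of_mem_dLT {q : ℂ[X]} {k : ℕ} (hk : 1 ≤ k) (hq : q ∈ degreeLT ℂ k) :
    q.natDegree < k := by
  by_cases h0 : q = 0
  · simpa [h0]
  · exact (natDegree_lt_iff_degree_lt h0).2 (mem_degreeLT.1 hq)

lemma finrank_dLT (k : ℕ) : Module.finrank ℂ (degreeLT ℂ k) = k := by
  rw [(Polynomial.degreeLTEquiv ℂ k).finrank_eq]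
  simp [Module.finrank_pi]

-- finrank of image under a map injective on the submodule
lemma finrank_map_of_inj {A B : Type*} [AddCommGroup A] [AddCommGroup B] [Module ℂ A]
    [Module ℂ B] (f : A →ₗ[ℂ] B) (S : Submodule ℂ A)
    (hinj : ∀ x ∈ S, f x = 0 → x = 0) :
    Module.finrank ℂ (S.map f) = Module.finrank ℂ S := by
  have h1 : Function.Injective (f.comp S.subtype) := by
    intro x y hxy
    have hs : ((x : A) - y) ∈ S := sub_mem x.2 y.2
    have : f ((x : A) - (y : A)) = 0 := by
      simp only [map_sub]; simpa [sub_eq_zero] using hxy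
    exact Subtype.ext (sub_eq_zero.1 (hinj _ hs this))
  have h2 : S.map f = LinearMap.range (f.comp S.subtype) := by
    rw [LinearMap.range_comp, Submodule.range_subtype]
  rw [h2, LinearMap.finrank_range_of_inj h1]

-- injectivity of phiL on degreeLT (d+1) for d ≤ n
lemma phiL_inj {n : ℕ} (u v : Fin (n+1) → ℂ) (hv : ∀ k, v k ≠ 0)
    (ht : Function.Injective fun k => u k / v k) {d : ℕ} (hd : d ≤ n)
    {q : ℂ[X]} (hq : q ∈ degreeLT ℂ (d+1)) (h0 : phiL u v d q = 0) : q = 0 := by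
  have heval : ∀ k : Fin (n+1), q.eval (u k / v k) = 0 := by
    intro k
    have := congrFun h0 k
    rw [phiL_apply] at this
    simpa [pow_ne_zero d (hv k)] using this
  refine Polynomial.eq_zero_of_natDegree_lt_card_of_eval_eq_zero q ht heval ?_
  have : q.natDegree < d + 1 := by
    by_cases h : q = 0
    · simp [h]
    · exact (natDegree_lt_iff_degree_lt h).2 (mem_degreeLT.1 hq)
  simpa using lt_of_lt_of_le this (show d + 1 ≤ n + 1 by omega)

lemma coprime_linear {a b a' b' : ℂ} (h : a * b' - a' * b ≠ 0) :
    IsCoprime (C a * X + C b) (C a' * X + C b') := by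
  set D := a * b' - a' * b with hD
  refine ⟨C (-a'/D), C (a/D), ?_⟩
  have key : C (-a'/D) * (C a * X + C b) + C (a/D) * (C a' * X + C b')
      = C ((-a'/D) * a + (a/D) * a') * X + C ((-a'/D) * b + (a/D) * b') := by
    simp only [C_add, C_mul]; ring
  rw [key]
  have h1 : (-a'/D) * a + (a/D) * a' = 0 := by ring
  have h2 : (-a'/D) * b + (a/D) * b' = 1 := by
    field_simp
    ring
  rw [h1, h2]
  simp

lemma lp_ne_zero {a b : ℂ} (h : ¬(a = 0 ∧ b = 0)) : C a * X + C b ≠ 0 := by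
  intro hq
  apply h
  constructor
  · have := congrArg (fun q => coeff q 1) hq; simpa using this
  · have := congrArg (fun q => coeff q 0) hq; simpa using this

-- composition identity : mulLeft (p i) ∘ phiL (r-1) = phiL r ∘ mulLeft lp
lemma comp_eq {n : ℕ} (u v : Fin (n+1) → ℂ) (hv : ∀ k, v k ≠ 0) {r : ℕ} (hr : 1 ≤ r)
    (a b : ℂ) :
    (LinearMap.mulLeft ℂ (a • u + b • v)).comp (phiL u v (r-1))
      = (phiL u v r).comp (LinearMap.mulLeft ℂ (C a * X + C b)) := by
  apply LinearMap.ext; intro q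
  funext k
  simp only [LinearMap.comp_apply, LinearMap.mulLeft_apply]
  rw [show ((a • u + b • v) * phiL u v (r-1) q) k
      = (a * u k + b * v k) * phiL u v (r-1) q k from by simp [mul_comm]]
  rw [phiL_apply, phiL_apply]
  simp only [eval_mul, eval_add, eval_mul, eval_C, eval_X]
  have hvr : v k ^ r = v k ^ (r-1) * v k := by
    rw [← pow_succ]; congr 1; omega
  rw [hvr]
  have : v k * (a * (u k / v k) + b) = a * u k + b * v k := by
    rw [mul_add, mul_comm (v k) (a * (u k / v k)), mul_assoc,
      div_mul_cancel₀ _ (hv k), mul_comm (v k) b]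
  calc (a * u k + b * v k) * (v k ^ (r-1) * eval (u k / v k) q)
      = (v k * (a * (u k / v k) + b)) * (v k ^ (r-1) * eval (u k / v k) q) := by rw [this]
    _ = v k ^ (r-1) * v k * ((a * (u k / v k) + b) * eval (u k / v k) q) := by ring
-- central intersection machinery (appended to wip)
namespace StarCfg
open Polynomial

variable {n m r : ℕ} (u v : Fin (n+1) → ℂ) (a b : Fin m → ℂ)

noncomputable def lp (i : Fin m) : ℂ[X] := C (a i) * X + C (b i)

noncomputable def HP (r : ℕ) (i : Fin m) : Submodule ℂ (Fin (n+1) → ℂ) :=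
  ((degreeLT ℂ r).map (LinearMap.mulLeft ℂ (lp a b i))).map (phiL u v r)

lemma natDeg_lp_le (i : Fin m) : (lp a b i).natDegree ≤ 1 := natDegree_linear_le

lemma natDeg_prod_lp_le (s : Finset (Fin m)) :
    (∏ i ∈ s, lp a b i).natDegree ≤ s.card :=
  (natDegree_prod_le _ _).trans (by
    calc ∑ i ∈ s, (lp a b i).natDegree ≤ ∑ _i ∈ s, 1 :=
      Finset.sum_le_sum fun i _ => natDeg_lp_le a b i
    _ = s.card := by simp)

variable (hab : ∀ i, ¬(a i = 0 ∧ b i = 0))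
  (hdet : ∀ i i', i ≠ i' → a i * b i' - a i' * b i ≠ 0)

include hab in
lemma lp_ne (i : Fin m) : lp a b i ≠ 0 := lp_ne_zero (hab i)

include hab in
lemma prod_lp_ne (s : Finset (Fin m)) : (∏ i ∈ s, lp a b i) ≠ 0 :=
  Finset.prod_ne_zero_iff.2 fun i _ => lp_ne a b hab i

lemma natDeg_prod_lp_eq (s : Finset (Fin m)) (h : ∀ i ∈ s, a i ≠ 0) :
    (∏ i ∈ s, lp a b i).natDegree = s.card := by
  simp only [lp]
  rw [natDegree_prod _ _ (fun i hi => lp_ne_zero (fun hc => h i hi hc.1))]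
  rw [Finset.sum_congr rfl (fun i hi => natDegree_linear (h i hi))]
  simp

include hab hdet in
lemma natDeg_prod_lp_eq' (s : Finset (Fin m)) {i₀ : Fin m} (hi₀ : i₀ ∈ s) (ha₀ : a i₀ = 0) :
    (∏ i ∈ s, lp a b i).natDegree = s.card - 1 := by
  have hothers : ∀ i ∈ s.erase i₀, a i ≠ 0 := by
    intro i hi
    have hne : i ≠ i₀ := Finset.ne_of_mem_erase hi
    intro hai
    exact hdet i i₀ hne (by rw [hai, ha₀]; ring)
  rw [← Finset.mul_prod_erase s _ hi₀, natDegree_mul (lp_ne a b hab i₀)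
    (Finset.prod_ne_zero_iff.2 fun i hi => lp_ne a b hab i)]
  rw [natDeg_prod_lp_eq a b _ hothers, Finset.card_erase_of_mem hi₀]
  have : (lp a b i₀).natDegree = 0 := by
    rw [lp, ha₀]; simp
  omega

include hdet in
lemma pairwise_coprime_lp (s : Finset (Fin m)) :
    Set.Pairwise ↑s (Function.onFun IsCoprime fun i => lp a b i) :=
  fun i _ i' _ hne => coprime_linear (hdet i i' hne)

-- the representation sub-lemma
omit hab in
lemma repr_of_mem_inf (hr : 1 ≤ r) (hrn : r ≤ n) (hv : ∀ k, v k ≠ 0)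
    (ht : Function.Injective fun k => u k / v k)
    (s : Finset (Fin m)) (hs0 : s.Nonempty) {w : Fin (n+1) → ℂ}
    (hw : w ∈ ⨅ i ∈ s, HP u v a b r i) :
    ∃ Q ∈ degreeLT ℂ (r+1), w = phiL u v r Q ∧ (∀ i ∈ s, lp a b i ∣ Q) ∧
      (∀ i ∈ s, a i = 0 → Q.natDegree ≤ r - 1) := by
  simp only [Submodule.mem_iInf] at hw
  have hex : ∀ i ∈ s, ∃ q, q ∈ degreeLT ℂ r ∧ phiL u v r (lp a b i * q) = w := by
    intro i hi
    obtain ⟨x, hx, hxw⟩ := hw i hi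
    obtain ⟨q, hq, rfl⟩ := hx
    exact ⟨q, hq, hxw⟩
  choose q hq hqw using hex
  obtain ⟨i₀, hi₀⟩ := hs0
  set Q : ℂ[X] := lp a b i₀ * q i₀ hi₀ with hQ
  have hmem : ∀ i (hi : i ∈ s), lp a b i * q i hi ∈ degreeLT ℂ (r+1) := by
    intro i hi
    apply mem_dLT
    have h1 := natDeg_of_mem_dLT hr (hq i hi)
    have := natDegree_mul_le (p := lp a b i) (q := q i hi)
    have := natDeg_lp_le a b i
    omega
  have hkey : ∀ i (hi : i ∈ s), lp a b i * q i hi = Q := by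
    intro i hi
    have hsub : lp a b i * q i hi - Q ∈ degreeLT ℂ (r+1) :=
      sub_mem (hmem i hi) (hmem i₀ hi₀)
    have h0 : phiL u v r (lp a b i * q i hi - Q) = 0 := by
      rw [map_sub, hqw i hi, hQ, hqw i₀ hi₀, sub_self]
    have := phiL_inj u v hv ht hrn hsub h0
    linear_combination (norm := module) this
  refine ⟨Q, hmem i₀ hi₀, (hqw i₀ hi₀).symm, ?_, ?_⟩
  · intro i hi
    exact ⟨q i hi, (hkey i hi).symm⟩
  · intro i hi hai
    rw [← hkey i hi]
    have h1 := natDeg_of_mem_dLT hr (hq i hi)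
    have h2 := natDegree_mul_le (p := lp a b i) (q := q i hi)
    have h3 : (lp a b i).natDegree = 0 := by rw [lp, hai]; simp
    omega

include hab hdet in
lemma inf_HP_eq (hr : 1 ≤ r) (hrn : r ≤ n) (hv : ∀ k, v k ≠ 0)
    (ht : Function.Injective fun k => u k / v k)
    (s : Finset (Fin m)) (hs0 : s.Nonempty) (hsr : s.card ≤ r) :
    (⨅ i ∈ s, HP u v a b r i)
      = ((degreeLT ℂ (r+1-s.card)).map
          (LinearMap.mulLeft ℂ (∏ i ∈ s, lp a b i))).map (phiL u v r) := by
  apply le_antisymm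
  · intro w hw
    obtain ⟨Q, hQmem, rfl, hdvd, hconst⟩ :=
      repr_of_mem_inf u v a b hr hrn hv ht s hs0 hw
    have hproddvd : (∏ i ∈ s, lp a b i) ∣ Q :=
      Finset.prod_dvd_of_coprime (pairwise_coprime_lp a b hdet s) hdvd
    obtain ⟨h, rfl⟩ := hproddvd
    refine Submodule.mem_map_of_mem ⟨h, ?_, rfl⟩
    by_cases hh0 : h = 0
    · simp [hh0, Submodule.zero_mem]
    · apply mem_dLT
      have hcard1 : 1 ≤ s.card := Finset.card_pos.2 hs0
      have heq := natDegree_mul (prod_lp_ne a b hab s) hh0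
      have hQnd : ((∏ i ∈ s, lp a b i) * h).natDegree ≤ r :=
        Nat.lt_succ_iff.1 (natDeg_of_mem_dLT (by omega) hQmem)
      by_cases hall : ∀ i ∈ s, a i ≠ 0
      · have := natDeg_prod_lp_eq a b s hall
        omega
      · push_neg at hall
        obtain ⟨i₀, hi₀s, hai₀⟩ := hall
        have h1 := natDeg_prod_lp_eq' a b hab hdet s hi₀s hai₀
        have h2 := hconst i₀ hi₀s hai₀
        omega
  · apply le_iInf; intro i; apply le_iInf; intro hi
    apply Submodule.map_mono
    rintro x ⟨h, hh, rfl⟩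
    have hcard1 : 1 ≤ s.card := Finset.card_pos.2 ⟨i, hi⟩
    refine ⟨(∏ j ∈ s.erase i, lp a b j) * h, ?_, ?_⟩
    · apply mem_dLT
      have h1 := natDeg_prod_lp_le a b (s.erase i)
      have h2 : h.natDegree < r + 1 - s.card := natDeg_of_mem_dLT (by omega) hh
      have h3 := natDegree_mul_le (p := ∏ j ∈ s.erase i, lp a b j) (q := h)
      have h4 : (s.erase i).card = s.card - 1 := Finset.card_erase_of_mem hi
      omega
    · simp only [LinearMap.mulLeft_apply]
      rw [← Finset.mul_prod_erase s _ hi, mul_assoc]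

include hab hdet in
lemma inf_HP_eq_bot (hr : 1 ≤ r) (hrn : r ≤ n) (hv : ∀ k, v k ≠ 0)
    (ht : Function.Injective fun k => u k / v k)
    (s : Finset (Fin m)) (hcard : s.card = r + 1) :
    (⨅ i ∈ s, HP u v a b r i) = ⊥ := by
  rw [eq_bot_iff]
  intro w hw
  have hs0 : s.Nonempty := Finset.card_pos.1 (by omega)
  obtain ⟨Q, hQmem, rfl, hdvd, hconst⟩ :=
    repr_of_mem_inf u v a b hr hrn hv ht s hs0 hw
  have hproddvd : (∏ i ∈ s, lp a b i) ∣ Q :=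
    Finset.prod_dvd_of_coprime (pairwise_coprime_lp a b hdet s) hdvd
  have hQ0 : Q = 0 := by
    by_contra hQ0
    have hle := Polynomial.natDegree_le_of_dvd hproddvd hQ0
    have hQnd : Q.natDegree ≤ r := Nat.lt_succ_iff.1 (natDeg_of_mem_dLT (by omega) hQmem)
    by_cases hall : ∀ i ∈ s, a i ≠ 0
    · have := natDeg_prod_lp_eq a b s hall
      omega
    · push_neg at hall
      obtain ⟨i₀, hi₀s, hai₀⟩ := hall
      have h1 := natDeg_prod_lp_eq' a b hab hdet s hi₀s hai₀
      have h2 := hconst i₀ hi₀s hai₀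
      omega
  simp [hQ0]

end StarCfg
-- final assembly helpers
open Polynomial

lemma iInf_fin_eq_iInf_image {α : Type*} [CompleteLattice α] {j m : ℕ}
    (e : Fin j → Fin m) (f : Fin m → α) :
    (⨅ i, f (e i)) = ⨅ x ∈ Finset.image e Finset.univ, f x := by
  apply le_antisymm
  · refine le_iInf₂ fun x hx => ?_
    obtain ⟨i, _, rfl⟩ := Finset.mem_image.1 hx
    exact iInf_le _ i
  · exact le_iInf fun i => iInf₂_le (e i) (Finset.mem_image_of_mem e (Finset.mem_univ i))

lemma degreeLT_one_eq_span : degreeLT ℂ 1 = Submodule.span ℂ {(1 : ℂ[X])} := by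
  ext q
  rw [Submodule.mem_span_singleton]
  constructor
  · intro hq
    have h0 : q.natDegree = 0 := by
      have := natDeg_of_mem_dLT le_rfl hq
      omega
    obtain ⟨c, hc⟩ := Polynomial.natDegree_eq_zero.1 h0
    exact ⟨c, by rw [← hc, smul_eq_C_mul, mul_one]⟩
  · rintro ⟨c, rfl⟩
    apply mem_dLT
    have : c • (1 : ℂ[X]) = C c := by rw [smul_eq_C_mul, mul_one]
    rw [this]
    simp

lemma phi_prod_lp {n m r : ℕ} (u v : Fin (n+1) → ℂ) (hv : ∀ k, v k ≠ 0)
    (a b : Fin m → ℂ) (p : Fin m → Fin (n+1) → ℂ)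
    (hab : ∀ i, a i • u + b i • v = p i) (s : Finset (Fin m)) (hcard : s.card = r) :
    phiL u v r (∏ i ∈ s, StarCfg.lp a b i) = ∏ i ∈ s, p i := by
  funext k
  rw [phiL_apply, eval_prod]
  rw [show (∏ i ∈ s, p i) k = ∏ i ∈ s, p i k from Finset.prod_apply _ _ _]
  have h1 : (v k : ℂ) ^ r = ∏ _i ∈ s, v k := by rw [Finset.prod_const, hcard]
  rw [h1, ← Finset.prod_mul_distrib]
  refine Finset.prod_congr rfl fun i hi => ?_
  rw [← hab i]
  simp only [StarCfg.lp, eval_add, eval_mul, eval_C, eval_X, Pi.add_apply,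
    Pi.smul_apply, smul_eq_mul]
  rw [mul_add, mul_comm (v k) (a i * (u k / v k)), mul_assoc,
    div_mul_cancel₀ _ (hv k), mul_comm (v k) (b i)]

/-- The square-free Hadamard power of `m` distinct points on a generic line is a star
configuration in `M = L^{⋆r}`: the `m` hyperplanes `Hᵢ = pᵢ ⋆ L^{⋆(r-1)}` of `M` are
in linear general position, and each `r`-fold Hadamard product of distinct points of
`Z` is the corresponding `r`-fold intersection of the hyperplanes. -/
theorem squarefree_hadamard_power_star_configuration (n m r : ℕ)
    (hrm : r ≤ m) (hrn : r ≤ n) (hr : 1 ≤ r)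
    (u v : Fin (n + 1) → ℂ)
    (hu : ∀ i, u i ≠ 0) (hv : ∀ i, v i ≠ 0)
    (hminor : ∀ i k : Fin (n + 1), i < k → u i * v k - u k * v i ≠ 0)
    (p : Fin m → Fin (n + 1) → ℂ)
    (hpL : ∀ i, p i ∈ Submodule.span ℂ {u, v})
    (hp0 : ∀ i k, p i k ≠ 0)
    (hdist : ∀ i i', i ≠ i' → ∀ c : ℂ, p i' ≠ c • p i) :
    let L := Submodule.span ℂ {u, v}
    let M := hadPowSpan L r
    let H : Fin m → Submodule ℂ (Fin (n + 1) → ℂ) :=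
      fun i => (hadPowSpan L (r - 1)).map (LinearMap.mulLeft ℂ (p i))
    Module.finrank ℂ M = r + 1 ∧
    (∀ i, H i ≤ M ∧ Module.finrank ℂ (H i) = r) ∧
    (∀ (j : ℕ) (e : Fin j → Fin m), Function.Injective e → 1 ≤ j → j ≤ r →
      Module.finrank ℂ ↥(⨅ i, H (e i)) = r + 1 - j) ∧
    (∀ e : Fin (r + 1) → Fin m, Function.Injective e → (⨅ i, H (e i)) = ⊥) ∧
    (∀ s : Finset (Fin m), s.card = r →
      (⨅ i ∈ s, H i) = Submodule.span ℂ {∏ i ∈ s, p i}) := by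
  intro L M H
  -- basic data
  have ht : Function.Injective fun k : Fin (n+1) => u k / v k := by
    intro k k' hkk
    by_contra hne
    have h1 : u k * v k' = u k' * v k := (div_eq_div_iff (hv k) (hv k')).1 hkk
    rcases lt_or_gt_of_ne hne with hlt | hgt
    · exact hminor k k' hlt (by rw [h1]; ring)
    · exact hminor k' k hgt (by rw [h1]; ring)
  choose a b hab using fun i => Submodule.mem_span_pair.1 (hpL i)
  have habnz : ∀ i, ¬(a i = 0 ∧ b i = 0) := by
    rintro i ⟨ha, hb⟩
    apply hp0 i 0
    rw [← hab i, ha, hb]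
    simp
  have hdet : ∀ i i', i ≠ i' → a i * b i' - a i' * b i ≠ 0 := by
    intro i i' hne hdet0
    have hdet0' : a i * b i' = a i' * b i := sub_eq_zero.1 hdet0
    by_cases ha : a i = 0
    · have hb : b i ≠ 0 := fun hb => habnz i ⟨ha, hb⟩
      have ha' : a i' = 0 := by
        have : a i' * b i = 0 := by rw [← hdet0']; rw [ha]; ring
        rcases mul_eq_zero.1 this with h | h
        · exact h
        · exact absurd h hb
      refine hdist i i' hne (b i' / b i) ?_
      rw [← hab i, ← hab i', ha, ha']
      rw [smul_add, smul_smul, smul_smul]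
      rw [div_mul_cancel₀ _ hb]
      simp
    · refine hdist i i' hne (a i' / a i) ?_
      rw [← hab i, ← hab i']
      rw [smul_add, smul_smul, smul_smul]
      rw [div_mul_cancel₀ _ ha]
      have hcb : a i' / a i * b i = b i' := by
        field_simp
        first
        | linear_combination hdet0'
        | linear_combination -hdet0'
      rw [hcb]
  -- identification of the objects
  have hφinj : ∀ x ∈ degreeLT ℂ (r+1), phiL u v r x = 0 → x = 0 := fun x hx h =>
    phiL_inj u v hv ht hrn hx h
  have hM : M = (degreeLT ℂ (r+1)).map (phiL u v r) := hadPow_eq u v hv r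
  have hHP : ∀ i, H i = StarCfg.HP u v a b r i := by
    intro i
    show (hadPowSpan L (r - 1)).map (LinearMap.mulLeft ℂ (p i)) = _
    have h1 : hadPowSpan L (r-1) = (degreeLT ℂ r).map (phiL u v (r-1)) := by
      have := hadPow_eq u v hv (r-1)
      rwa [Nat.sub_add_cancel hr] at this
    rw [h1, ← Submodule.map_comp, ← hab i, comp_eq u v hv hr (a i) (b i),
      Submodule.map_comp]
    rfl
  have hinner_sub : ∀ i, (degreeLT ℂ r).map (LinearMap.mulLeft ℂ (StarCfg.lp a b i))
      ≤ degreeLT ℂ (r+1) := by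
    rintro i x ⟨q, hq, rfl⟩
    apply mem_dLT
    have h1 := natDeg_of_mem_dLT hr hq
    have h2 := natDegree_mul_le (p := StarCfg.lp a b i) (q := q)
    have h3 := StarCfg.natDeg_lp_le a b i
    simp only [LinearMap.mulLeft_apply]
    omega
  refine ⟨?_, ?_, ?_, ?_, ?_⟩
  · -- finrank M = r + 1
    rw [hM, finrank_map_of_inj _ _ hφinj, finrank_dLT]
  · -- hyperplanes
    intro i
    constructor
    · rw [hHP i, hM]
      exact Submodule.map_mono (hinner_sub i)
    · rw [hHP i, StarCfg.HP]
      rw [finrank_map_of_inj _ _ (fun x hx h0 => hφinj x (hinner_sub i hx) h0)]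
      rw [finrank_map_of_inj _ _ (fun x _ h0 => by
        rcases (show StarCfg.lp a b i = 0 ∨ x = 0 by simpa using h0) with h | h
        · exact absurd h (StarCfg.lp_ne a b habnz i)
        · exact h)]
      exact finrank_dLT r
  · -- r-fold (and fewer) intersections
    intro j e he hj1 hjr
    have hconv : (⨅ i, H (e i)) = ⨅ x ∈ Finset.image e Finset.univ, StarCfg.HP u v a b r x := by
      rw [iInf_fin_eq_iInf_image e H]
      exact iInf_congr fun x => iInf_congr fun _ => hHP x
    rw [hconv]
    have hcard : (Finset.image e Finset.univ).card = j := by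
      rw [Finset.card_image_of_injective _ he, Finset.card_univ, Fintype.card_fin]
    have hs0 : (Finset.image e Finset.univ).Nonempty := Finset.card_pos.1 (by omega)
    rw [StarCfg.inf_HP_eq u v a b habnz hdet hr hrn hv ht _ hs0 (by omega), hcard]
    have hSsub : (degreeLT ℂ (r+1-j)).map
        (LinearMap.mulLeft ℂ (∏ i ∈ Finset.image e Finset.univ, StarCfg.lp a b i))
        ≤ degreeLT ℂ (r+1) := by
      rintro x ⟨h, hh, rfl⟩
      apply mem_dLT
      have h1 := StarCfg.natDeg_prod_lp_le a b (Finset.image e Finset.univ)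
      have h2 : h.natDegree < r + 1 - j := natDeg_of_mem_dLT (by omega) hh
      have h3 := natDegree_mul_le
        (p := ∏ i ∈ Finset.image e Finset.univ, StarCfg.lp a b i) (q := h)
      simp only [LinearMap.mulLeft_apply]
      omega
    rw [finrank_map_of_inj _ _ (fun x hx h0 => hφinj x (hSsub hx) h0)]
    rw [finrank_map_of_inj _ _ (fun x _ h0 => by
      rcases (show (∏ i ∈ Finset.image e Finset.univ, StarCfg.lp a b i) = 0 ∨ x = 0
          by simpa using h0) with h | h
      · exact absurd h (StarCfg.prod_lp_ne a b habnz _)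
      · exact h)]
    exact finrank_dLT (r+1-j)
  · -- (r+1)-fold intersections are trivial
    intro e he
    have hconv : (⨅ i, H (e i)) = ⨅ x ∈ Finset.image e Finset.univ, StarCfg.HP u v a b r x := by
      rw [iInf_fin_eq_iInf_image e H]
      exact iInf_congr fun x => iInf_congr fun _ => hHP x
    rw [hconv]
    have hcard : (Finset.image e Finset.univ).card = r + 1 := by
      rw [Finset.card_image_of_injective _ he, Finset.card_univ, Fintype.card_fin]
    exact StarCfg.inf_HP_eq_bot u v a b habnz hdet hr hrn hv ht _ hcard
  · -- points of the star configuration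
    intro s hcard
    have hconv : (⨅ i ∈ s, H i) = ⨅ i ∈ s, StarCfg.HP u v a b r i :=
      iInf_congr fun x => iInf_congr fun _ => hHP x
    rw [hconv]
    have hs0 : s.Nonempty := Finset.card_pos.1 (by omega)
    rw [StarCfg.inf_HP_eq u v a b habnz hdet hr hrn hv ht s hs0 (le_of_eq hcard)]
    have h1 : r + 1 - s.card = 1 := by omega
    rw [h1, degreeLT_one_eq_span, Submodule.map_span, Submodule.map_span]
    congr 1
    rw [Set.image_singleton, Set.image_singleton]
    simp only [LinearMap.mulLeft_apply, mul_one]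
    rw [phi_prod_lp u v hv a b p hab s hcard]
end

section
/- Let L ⊂ C^{n+1} be the span of m+1 vectors p_0, ..., p_m whose coordinates a_{ij} = (p_i)_j are algebraically independent (generic), and suppose n + 1 ≥ binomial(m+r, r). Then the span of all r-fold coordinatewise products of elements of L has dimension exactly binomial(m+r, r); equivalently, the vectors p_0^{⋆r_0} ⋆ p_1^{⋆r_1} ⋆ ... ⋆ p_m^{⋆r_m}, over all tuples (r_0,...,r_m) of nonnegative integers summing to r, are linearly independent. -/
open Finset

noncomputable section

/-- Tuples of naturals summing to `r` are equivalent to multisets of size `r`. -/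
def hadamardCompSymEquiv (k r : ℕ) : {c : Fin k → ℕ // ∑ i, c i = r} ≃ Sym (Fin k) r where
  toFun c := ⟨Finsupp.toMultiset (Finsupp.equivFunOnFinite.symm c.1), by
    rw [Finsupp.card_toMultiset, Finsupp.sum_fintype]
    · exact c.2
    · intro _; rfl⟩
  invFun s := ⟨fun i => Multiset.count i s.1, by rw [Multiset.sum_count_eq_card (fun _ _ => Finset.mem_univ _)]; exact s.2⟩
  left_inv c := by
    apply Subtype.ext
    funext i
    simp
  right_inv s := by
    apply Subtype.ext
    ext a
    simp

theorem hadamard_card_comp (k r : ℕ) [Fintype {c : Fin k → ℕ // ∑ i, c i = r}] :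
    Fintype.card {c : Fin k → ℕ // ∑ i, c i = r} = (k + r - 1).choose r := by
  rw [Fintype.card_congr (hadamardCompSymEquiv k r), Sym.card_sym_eq_choose, Fintype.card_fin]

theorem hadamard_prod_monomial {σ : Type*} {γ : Type*} (s : Finset γ) (f : γ → (σ →₀ ℕ)) :
    ∏ k ∈ s, MvPolynomial.monomial (f k) (1 : ℚ) = MvPolynomial.monomial (∑ k ∈ s, f k) 1 := by
  classical
  induction s using Finset.cons_induction with
  | empty => simp
  | cons a s ha ih => rw [Finset.prod_cons, Finset.sum_cons, ih, MvPolynomial.monomial_mul, mul_one]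

end

theorem hadamard_li (n m r : ℕ)
    (hn : (m + r).choose r ≤ n + 1)
    (a : Fin (m + 1) → Fin (n + 1) → ℂ)
    (ha : AlgebraicIndependent ℚ (fun q : Fin (m + 1) × Fin (n + 1) => a q.1 q.2)) :
    LinearIndependent ℂ
      (fun c : {c : Fin (m + 1) → ℕ // ∑ i, c i = r} =>
        ∏ i, a i ^ (c.1 i)) := by
  classical
  set I := {c : Fin (m + 1) → ℕ // ∑ i, c i = r} with hI
  haveI : Fintype I := Fintype.ofEquiv _ (hadamardCompSymEquiv (m + 1) r).symm
  have hcard : Fintype.card I ≤ n + 1 := by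
    rw [hadamard_card_comp]
    simpa using hn
  -- an embedding of the index set into the coordinates
  let σ : I ↪ Fin (n + 1) :=
    (Fintype.equivFin I).toEmbedding.trans (Fin.castLEEmb hcard)
  -- the generic monomial matrix
  let R := MvPolynomial (Fin (m + 1) × Fin (n + 1)) ℚ
  let e : I → I → ((Fin (m + 1) × Fin (n + 1)) →₀ ℕ) :=
    fun c c' => ∑ i, Finsupp.single (i, σ c') (c.1 i)
  let Q : Matrix I I R := fun c c' => MvPolynomial.monomial (e c c') 1
  let d : Equiv.Perm I → ((Fin (m + 1) × Fin (n + 1)) →₀ ℕ) :=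
    fun τ => ∑ c', e (τ c') c'
  have hd_eval : ∀ (τ : Equiv.Perm I) (c' : I) (i : Fin (m + 1)),
      d τ (i, σ c') = (τ c').1 i := by
    intro τ c' i
    have : d τ (i, σ c') = ∑ c'', ∑ i',
        (Finsupp.single (i', σ c'') ((τ c'').1 i')) (i, σ c') := by
      simp [d, e, Finsupp.finset_sum_apply]
    rw [this, Finset.sum_eq_single c', Finset.sum_eq_single i]
    · simp [Finsupp.single_apply]
    · intro i' _ hne
      simp only [Finsupp.single_apply, Prod.mk.injEq]
      simp [hne]
    · simp
    · intro c'' _ hne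
      apply Finset.sum_eq_zero
      intro i' _
      simp only [Finsupp.single_apply, Prod.mk.injEq]
      rw [if_neg]
      rintro ⟨-, h2⟩
      exact hne (σ.injective h2)
    · simp
  have hd_inj : Function.Injective d := by
    intro τ τ' h
    ext c' : 1
    have : (τ c').1 = (τ' c').1 := by
      funext i
      rw [← hd_eval τ c' i, ← hd_eval τ' c' i, h]
    exact Subtype.ext this
  have hQdet : Q.det ≠ 0 := by
    intro h0
    have hterm : ∀ τ : Equiv.Perm I, ∏ c', Q (τ c') c' = MvPolynomial.monomial (d τ) 1 := by
      intro τ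
      rw [show (∏ c', Q (τ c') c') = ∏ c', MvPolynomial.monomial (e (τ c') c') 1 from rfl,
        hadamard_prod_monomial]
    have hco : MvPolynomial.coeff (d 1) Q.det = 1 := by
      rw [Matrix.det_apply]
      rw [MvPolynomial.coeff_sum]
      rw [Finset.sum_eq_single (1 : Equiv.Perm I)]
      · rw [hterm 1]
        simp [MvPolynomial.coeff_smul, MvPolynomial.coeff_monomial]
      · intro τ _ hne
        rw [hterm τ, MvPolynomial.coeff_smul, MvPolynomial.coeff_monomial,
          if_neg (fun h => hne (hd_inj h)), smul_zero]
      · simp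
    rw [h0] at hco
    simp at hco
  -- evaluate at the given generic point
  let φ : R →ₐ[ℚ] ℂ := MvPolynomial.aeval (fun q : Fin (m + 1) × Fin (n + 1) => a q.1 q.2)
  have hφ : Function.Injective φ := ha
  let M : Matrix I I ℂ := fun c c' => ∏ i, a i (σ c') ^ (c.1 i)
  have hMQ : M = Q.map φ := by
    funext c c'
    show (∏ i, a i (σ c') ^ (c.1 i)) = φ (Q c c')
    rw [show Q c c' = ∏ i, (MvPolynomial.X (i, σ c') : R) ^ (c.1 i) by
      rw [show Q c c' = MvPolynomial.monomial (e c c') 1 from rfl,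
        ← hadamard_prod_monomial]
      exact Finset.prod_congr rfl fun i _ => (MvPolynomial.X_pow_eq_monomial).symm]
    rw [map_prod]
    simp only [φ, map_pow]
    exact Finset.prod_congr rfl fun i _ => by rw [MvPolynomial.aeval_X]
  have hMdet : IsUnit M.det := by
    rw [hMQ, show Q.map ⇑φ = φ.toRingHom.mapMatrix Q from rfl, ← RingHom.map_det]
    refine isUnit_iff_ne_zero.2 fun h => hQdet (hφ ?_)
    simpa using h
  have hrows : LinearIndependent ℂ (fun c : I => M c) :=
    Matrix.linearIndependent_rows_iff_isUnit.2 ((Matrix.isUnit_iff_isUnit_det M).2 hMdet)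
  have hcomp : (LinearMap.funLeft ℂ ℂ σ) ∘ (fun c : I => ∏ i, a i ^ (c.1 i)) =
      fun c : I => M c := by
    funext c
    funext c'
    simp [LinearMap.funLeft, M, Finset.prod_apply]
  exact LinearIndependent.of_comp (LinearMap.funLeft ℂ ℂ σ) (hcomp ▸ hrows)
/-- For a generic linear space `L = span{p₀, …, p_m} ⊂ ℂ^{n+1}` (coordinates
algebraically independent) with `n + 1 ≥ (m+r).choose r`, the span of all `r`-fold
coordinatewise products of elements of `L` has dimension exactly `(m+r).choose r`;
equivalently the products `p₀^{⋆r₀} ⋆ ⋯ ⋆ p_m^{⋆r_m}` with `∑ rᵢ = r` are linearly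
independent. -/
theorem hadamard_power_generic_span_dim (n m r : ℕ)
    (hn : (m + r).choose r ≤ n + 1)
    (a : Fin (m + 1) → Fin (n + 1) → ℂ)
    (ha : AlgebraicIndependent ℚ (fun q : Fin (m + 1) × Fin (n + 1) => a q.1 q.2)) :
    LinearIndependent ℂ
      (fun c : {c : Fin (m + 1) → ℕ // ∑ i, c i = r} =>
        ∏ i, a i ^ (c.1 i)) ∧
    Module.finrank ℂ
      (Submodule.span ℂ
        {w : Fin (n + 1) → ℂ | ∃ v : Fin r → (Fin (n + 1) → ℂ),
          (∀ i, v i ∈ Submodule.span ℂ (Set.range a)) ∧ w = ∏ i, v i}) =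
      (m + r).choose r := by
  classical
  have hli := hadamard_li n m r hn a ha
  refine ⟨hli, ?_⟩
  haveI : Fintype {c : Fin (m + 1) → ℕ // ∑ i, c i = r} :=
    Fintype.ofEquiv _ (hadamardCompSymEquiv (m + 1) r).symm
  set v : {c : Fin (m + 1) → ℕ // ∑ i, c i = r} → (Fin (n + 1) → ℂ) :=
    fun c => ∏ i, a i ^ (c.1 i) with hv
  set S : Set (Fin (n + 1) → ℂ) :=
    {w : Fin (n + 1) → ℂ | ∃ u : Fin r → (Fin (n + 1) → ℂ),
      (∀ i, u i ∈ Submodule.span ℂ (Set.range a)) ∧ w = ∏ i, u i} with hS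
  -- each monomial vector is an r-fold product of elements of the span
  have hv_mem : ∀ c, v c ∈ S := by
    intro c
    have hcard : Fintype.card (Σ i : Fin (m + 1), Fin (c.1 i)) = r := by
      simp [Fintype.card_sigma, c.2]
    let e := Fintype.equivFinOfCardEq hcard
    refine ⟨fun k => a (e.symm k).1, fun k => Submodule.subset_span ⟨_, rfl⟩, ?_⟩
    calc v c = ∏ i, ∏ _j : Fin (c.1 i), a i := by
          refine Finset.prod_congr rfl fun i _ => ?_
          simp [Finset.prod_const]
      _ = ∏ s : Σ i : Fin (m + 1), Fin (c.1 i), a s.1 := by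
          rw [← Finset.univ_sigma_univ]
          exact (Finset.prod_sigma univ (fun i => (univ : Finset (Fin (c.1 i)))) (fun s => a s.1)).symm
      _ = ∏ k : Fin r, a (e.symm k).1 :=
          Fintype.prod_equiv e _ _ (fun s => by simp)
  -- every r-fold product lies in the span of the monomial vectors
  have hS_sub : S ⊆ (Submodule.span ℂ (Set.range v) : Set (Fin (n + 1) → ℂ)) := by
    rintro w ⟨u, hu, rfl⟩
    have hch : ∀ k, ∃ t : Fin (m + 1) → ℂ, ∑ i, t i • a i = u k := by
      intro k
      exact (Submodule.mem_span_range_iff_exists_fun ℂ).1 (hu k)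
    choose t ht using hch
    have hsm : ∀ (tt : Fin r → ℂ) (x : Fin r → Fin (n + 1) → ℂ),
        ∏ k, tt k • x k = (∏ k, tt k) • ∏ k, x k := by
      intro tt x
      simp only [Algebra.smul_def, Finset.prod_mul_distrib, map_prod]
    have hw : ∏ k, u k = ∑ g : Fin r → Fin (m + 1),
        (∏ k, t k (g k)) • ∏ k, a (g k) := by
      calc ∏ k, u k = ∏ k, ∑ i, t k i • a i := by
            exact Finset.prod_congr rfl fun k _ => (ht k).symm
        _ = ∑ g ∈ Fintype.piFinset (fun _ : Fin r => (univ : Finset (Fin (m + 1)))),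
              ∏ k, t k (g k) • a (g k) := Finset.prod_univ_sum _ _
        _ = ∑ g : Fin r → Fin (m + 1), (∏ k, t k (g k)) • ∏ k, a (g k) := by
            rw [Fintype.piFinset_univ]
            exact Finset.sum_congr rfl fun g _ => hsm _ _
    rw [hw]
    refine Submodule.sum_mem _ fun g _ => Submodule.smul_mem _ _ (Submodule.subset_span ?_)
    refine ⟨⟨fun i => ({k | g k = i} : Finset (Fin r)).card, ?_⟩, ?_⟩
    · rw [← Finset.card_eq_sum_card_fiberwise (fun k _ => Finset.mem_univ (g k))]
      simp
    · show v _ = ∏ k, a (g k)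
      rw [← Finset.prod_fiberwise univ g (fun k => a (g k))]
      refine Finset.prod_congr rfl fun i _ => ?_
      rw [Finset.prod_congr rfl (fun k hk => by
        rw [(Finset.mem_filter.1 hk).2] : ∀ k ∈ ({k | g k = i} : Finset (Fin r)),
          a (g k) = a i), Finset.prod_const]
  have hspan : Submodule.span ℂ S = Submodule.span ℂ (Set.range v) := by
    refine le_antisymm (Submodule.span_le.2 hS_sub) (Submodule.span_mono ?_)
    exact Set.range_subset_iff.2 hv_mem
  rw [hspan, finrank_span_eq_card hli, hadamard_card_comp]
  simp
end

section
/- The generalized Vandermonde determinant is a nonzero polynomial: for m, r ≥ 0 and N = binomial(m+r, r), consider the N × N matrix whose rows are indexed by tuples (r_0, ..., r_m) of nonnegative integers summing to r, whose columns are indexed by 0 ≤ j ≤ N−1, and whose entries are the monomials Π_{i=0}^m a_{ij}^{r_i} in the polynomial ring C[a_{ij}]. Then the determinant of this matrix is a nonzero polynomial, and each of its coefficients (as a sum over the symmetric group S_N) is ±1 since no two permutation terms produce the same monomial. -/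
open MvPolynomial Finset

private lemma prod_monomial_one {σ R : Type*} [CommSemiring R] {ι : Type*} (s : Finset ι)
    (g : ι → (σ →₀ ℕ)) :
    (∏ x ∈ s, monomial (g x) (1 : R)) = monomial (∑ x ∈ s, g x) 1 := by
  induction s using Finset.cons_induction with
  | empty => simp [monomial_zero']
  | cons a s ha ih => rw [Finset.prod_cons, ih, Finset.sum_cons, monomial_mul, one_mul]

private lemma prod_prod_X_pow (n N : ℕ) (f : Fin n → Fin N → ℕ) (R : Type*) [CommSemiring R] :
    (∏ j : Fin N, ∏ i : Fin n, (X (i, j) : MvPolynomial (Fin n × Fin N) R) ^ f i j)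
      = monomial (Finsupp.equivFunOnFinite.symm fun p : Fin n × Fin N => f p.1 p.2) 1 := by
  simp only [X_pow_eq_monomial, prod_monomial_one]
  refine congrArg (fun s => monomial s (1:R)) ?_
  apply Finsupp.ext
  intro p
  classical
  have : (∑ j : Fin N, ∑ i : Fin n, Finsupp.single ((i, j) : Fin n × Fin N) (f i j)) p
      = ∑ j : Fin N, ∑ i : Fin n, if (i, j) = p then f i j else 0 := by
    simp [Finsupp.single_apply]
  rw [this, Finsupp.coe_equivFunOnFinite_symm]
  obtain ⟨pi, pj⟩ := p
  rw [Finset.sum_eq_single pj, Finset.sum_eq_single pi]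
  · simp
  · intro b _ hb; simp [Prod.ext_iff, hb]
  · simp
  · intro b _ hb
    apply Finset.sum_eq_zero
    intro i _; simp [Prod.ext_iff, hb]
  · simp


/-- The generalized Vandermonde determinant, as a polynomial in the variables
`a_{ij}`, is nonzero, and all of its coefficients are `0`, `1` or `-1` (the
permutation terms in the Leibniz expansion produce pairwise distinct monomials). -/
theorem generalized_vandermonde_nonzero (m r : ℕ)
    (e : {c : Fin (m + 1) → ℕ // ∑ i, c i = r} ≃ Fin ((m + r).choose r)) :
    Matrix.det (Matrix.of fun k j : Fin ((m + r).choose r) =>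
        ∏ i : Fin (m + 1),
          (MvPolynomial.X (i, j) :
            MvPolynomial (Fin (m + 1) × Fin ((m + r).choose r)) ℂ) ^ ((e.symm k).1 i))
      ≠ 0 ∧
    ∀ d : (Fin (m + 1) × Fin ((m + r).choose r)) →₀ ℕ,
      MvPolynomial.coeff d
          (Matrix.det (Matrix.of fun k j : Fin ((m + r).choose r) =>
            ∏ i : Fin (m + 1),
              (MvPolynomial.X (i, j) :
                MvPolynomial (Fin (m + 1) × Fin ((m + r).choose r)) ℂ) ^ ((e.symm k).1 i)))
        = 0 ∨
      MvPolynomial.coeff d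
          (Matrix.det (Matrix.of fun k j : Fin ((m + r).choose r) =>
            ∏ i : Fin (m + 1),
              (MvPolynomial.X (i, j) :
                MvPolynomial (Fin (m + 1) × Fin ((m + r).choose r)) ℂ) ^ ((e.symm k).1 i)))
        = 1 ∨
      MvPolynomial.coeff d
          (Matrix.det (Matrix.of fun k j : Fin ((m + r).choose r) =>
            ∏ i : Fin (m + 1),
              (MvPolynomial.X (i, j) :
                MvPolynomial (Fin (m + 1) × Fin ((m + r).choose r)) ℂ) ^ ((e.symm k).1 i)))
        = -1 := by
  classical
  set D : Equiv.Perm (Fin ((m + r).choose r)) → ((Fin (m + 1) × Fin ((m + r).choose r)) →₀ ℕ) := fun π =>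
    Finsupp.equivFunOnFinite.symm fun p : Fin (m + 1) × Fin ((m + r).choose r) => (e.symm (π p.2)).1 p.1 with hD
  have hDinj : Function.Injective D := by
    intro π π' h
    ext j
    have h2 : ∀ p : Fin (m + 1) × Fin ((m + r).choose r), (e.symm (π p.2)).1 p.1 = (e.symm (π' p.2)).1 p.1 :=
      fun p => congrFun (Finsupp.equivFunOnFinite.symm.injective h) p
    have : e.symm (π j) = e.symm (π' j) := Subtype.ext (funext fun i => h2 (i, j))
    exact congrArg Fin.val (e.symm.injective this)
  have hdet : Matrix.det (Matrix.of fun k j : Fin ((m + r).choose r) =>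
        ∏ i : Fin (m + 1),
          (MvPolynomial.X (i, j) : MvPolynomial (Fin (m + 1) × Fin ((m + r).choose r)) ℂ) ^ ((e.symm k).1 i))
      = ∑ π : Equiv.Perm (Fin ((m + r).choose r)), (Equiv.Perm.sign π : ℂ) • monomial (D π) 1 := by
    rw [Matrix.det_apply]
    refine Finset.sum_congr rfl fun π _ => ?_
    have : (∏ j : Fin ((m + r).choose r), ∏ i : Fin (m + 1),
          (MvPolynomial.X (i, j) : MvPolynomial (Fin (m + 1) × Fin ((m + r).choose r)) ℂ) ^ ((e.symm (π j)).1 i))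
        = monomial (D π) 1 :=
      prod_prod_X_pow (m + 1) ((m + r).choose r) (fun i j => (e.symm (π j)).1 i) ℂ
    rw [show (∏ j, Matrix.of (fun k j : Fin ((m + r).choose r) => ∏ i : Fin (m + 1),
          (MvPolynomial.X (i, j) : MvPolynomial (Fin (m + 1) × Fin ((m + r).choose r)) ℂ) ^ ((e.symm k).1 i)) (π j) j)
        = monomial (D π) 1 from this]
    rcases Int.units_eq_one_or (Equiv.Perm.sign π) with h | h <;> simp [h]
  have hcoeff : ∀ d, MvPolynomial.coeff d (Matrix.det (Matrix.of fun k j : Fin ((m + r).choose r) =>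
        ∏ i : Fin (m + 1),
          (MvPolynomial.X (i, j) : MvPolynomial (Fin (m + 1) × Fin ((m + r).choose r)) ℂ) ^ ((e.symm k).1 i)))
      = ∑ π : Equiv.Perm (Fin ((m + r).choose r)), if D π = d then (Equiv.Perm.sign π : ℂ) else 0 := by
    intro d
    rw [hdet, MvPolynomial.coeff_sum]
    refine Finset.sum_congr rfl fun π _ => ?_
    rw [MvPolynomial.coeff_smul, MvPolynomial.coeff_monomial]
    split <;> simp
  constructor
  · intro h
    have h1 := hcoeff (D 1)
    rw [h, MvPolynomial.coeff_zero] at h1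
    rw [Finset.sum_eq_single (1 : Equiv.Perm (Fin ((m + r).choose r)))] at h1
    · simp at h1
    · intro π _ hπ
      rw [if_neg (fun hd => hπ (hDinj hd))]
    · simp
  · intro d
    rw [hcoeff d]
    by_cases hex : ∃ π, D π = d
    · obtain ⟨π, hπ⟩ := hex
      rw [Finset.sum_eq_single π (fun π' _ hπ' => if_neg (fun hd => hπ' (hDinj (hπ ▸ hd))))
        (by simp), if_pos hπ]
      rcases Int.units_eq_one_or (Equiv.Perm.sign π) with h | h <;> simp [h]
    · left
      refine Finset.sum_eq_zero fun π _ => if_neg fun hd => hex ⟨π, hd⟩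
end

section
/- Hadamard product of varieties is associative on the level of defining sets: for subsets X, Y, Z of P^n, the Zariski closure of { p ⋆ q ⋆ z : p ∈ X, q ∈ Y, z ∈ Z, p ⋆ q ⋆ z defined } equals the Zariski closure of { s ⋆ z : s ∈ X ⋆ Y, z ∈ Z, s ⋆ z defined }, where X ⋆ Y is the Zariski closure of { p ⋆ q : p ∈ X, q ∈ Y, p ⋆ q defined }. Hence (X ⋆ Y) ⋆ Z = X ⋆ (Y ⋆ Z). -/
open MvPolynomial

/-- The set of (defined, i.e. nonzero) coordinatewise products of points of `A`
and `B`. -/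
def hadSet {n : ℕ} (A B : Set (Fin n → ℂ)) : Set (Fin n → ℂ) :=
  {w | w ≠ 0 ∧ ∃ a ∈ A, ∃ b ∈ B, w = a * b}

lemma subset_zclosure {n : ℕ} (S : Set (Fin n → ℂ)) : S ⊆ zclosure S :=
  fun x hx _ _ _ hv => hv x hx

lemma eval_scale {m : ℕ} (z x : Fin m → ℂ) (f : MvPolynomial (Fin m) ℂ) :
    eval x (bind₁ (fun i => C (z i) * X i) f) = eval (z * x) f := by
  have h := aeval_bind₁ (R := ℂ) x (fun i => C (z i) * X i) f
  simpa [Pi.mul_def] using h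

lemma scale_hom {m : ℕ} (z : Fin m → ℂ) {f : MvPolynomial (Fin m) ℂ} {d : ℕ}
    (hf : f.IsHomogeneous d) :
    (bind₁ (fun i => C (z i) * X i) f).IsHomogeneous d := by
  have := hf.aeval (fun i => C (z i) * X i) (fun i => isHomogeneous_C_mul_X (z i) i)
  simpa using this

lemma eval_hom0 {m : ℕ} {f : MvPolynomial (Fin m) ℂ} (hf : f.IsHomogeneous 0)
    (x y : Fin m → ℂ) : eval x f = eval y f := by
  have key : ∀ w : Fin m → ℂ, eval w f = ∑ m ∈ f.support, coeff m f := by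
    intro w
    rw [eval_eq]
    refine Finset.sum_congr rfl fun d hd => ?_
    have hd0 : d = 0 := by
      by_contra h
      have hne : d.degree ≠ 0 := fun hc => h (Finsupp.degree_eq_zero_iff d |>.mp hc)
      exact (mem_support_iff.mp hd) (hf.coeff_eq_zero hne)
    simp [hd0]
  rw [key x, key y]

lemma hadSet_comm {n : ℕ} (A B : Set (Fin n → ℂ)) : hadSet A B = hadSet B A := by
  ext w
  constructor <;> rintro ⟨hw0, a, ha, b, hb, rfl⟩ <;>
    exact ⟨mul_comm a b ▸ hw0, b, hb, a, ha, (mul_comm a b)⟩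

/-- Key lemma: taking the closure of the left factor does not change the closure. -/
lemma zclosure_hadSet_zclosure_left {n : ℕ} (S R : Set (Fin (n + 1) → ℂ)) :
    zclosure (hadSet (zclosure S) R) = zclosure (hadSet S R) := by
  have hvan : ∀ (d : ℕ) (f : MvPolynomial (Fin (n + 1)) ℂ), f.IsHomogeneous d →
      ((∀ w ∈ hadSet (zclosure S) R, eval w f = 0) ↔
        (∀ w ∈ hadSet S R, eval w f = 0)) := by
    intro d f hf
    constructor
    · intro h w hw
      refine h w ?_
      obtain ⟨hw0, a, ha, b, hb, rfl⟩ := hw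
      exact ⟨hw0, a, subset_zclosure S ha, b, hb, rfl⟩
    · intro h w hw
      obtain ⟨hw0, s, hs, r, hr, rfl⟩ := hw
      -- pick a coordinate where s * r is nonzero
      obtain ⟨i, hi⟩ : ∃ i, s i * r i ≠ 0 := by
        by_contra hc
        push_neg at hc
        exact hw0 (funext fun i => hc i)
      have hsi : s i ≠ 0 := fun h0 => hi (by simp [h0])
      have hri : r i ≠ 0 := fun h0 => hi (by simp [h0])
      rcases Nat.eq_zero_or_pos d with hd0 | hdpos
      · -- degree 0 : f is constant; find a point of hadSet S R
        subst hd0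
        -- there is p ∈ S with p i ≠ 0, else X i vanishes on S, contradicting s i ≠ 0
        obtain ⟨p, hp, hpi⟩ : ∃ p ∈ S, p i ≠ 0 := by
          by_contra hc
          push_neg at hc
          have := hs 1 (X i) (isHomogeneous_X ℂ i)
            (fun q hq => by simpa using hc q hq)
          simp at this
          exact hsi this
        have hpr : p * r ∈ hadSet S R := by
          refine ⟨fun h0 => ?_, p, hp, r, hr, rfl⟩
          have : p i * r i = 0 := by
            have := congrFun h0 i; simpa using this
          exact (mul_ne_zero hpi hri) this
        have := h (p * r) hpr
        rw [eval_hom0 hf (s * r) (p * r)]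
        exact this
      · -- degree ≥ 1 : substitute scaled variables
        set g := bind₁ (fun j => C (r j) * X j) f with hg
        have hgh : g.IsHomogeneous d := scale_hom r hf
        have hgv : ∀ p ∈ S, eval p g = 0 := by
          intro p hp
          rw [hg, eval_scale]
          by_cases hz : r * p = 0
          · rw [hz]
            have : eval (0 : Fin (n + 1) → ℂ) f = coeff 0 f := by
              rw [eval_zero]; rfl
            rw [this, hf.coeff_eq_zero]
            simpa using hdpos.ne
          · refine h (r * p) ⟨hz, p, hp, r, hr, mul_comm r p⟩
        have := hs d g hgh hgv
        rw [hg, eval_scale] at this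
        rwa [mul_comm r s] at this
  ext x
  constructor
  · intro hx d f hfh hv
    exact hx d f hfh ((hvan d f hfh).mpr hv)
  · intro hx d f hfh hv
    exact hx d f hfh ((hvan d f hfh).mp hv)
  
lemma zclosure_hadSet_zclosure_right {n : ℕ} (S A : Set (Fin (n + 1) → ℂ)) :
    zclosure (hadSet A (zclosure S)) = zclosure (hadSet A S) := by
  rw [hadSet_comm A (zclosure S), hadSet_comm A S]
  exact zclosure_hadSet_zclosure_left S A

/-- Associativity of the Hadamard product of projective varieties: for subsets
`X, Y, Z` of `ℙⁿ` (cones of nonzero vectors), the closure of the set of triple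
products equals `(X ⋆ Y) ⋆ Z`, and hence `(X ⋆ Y) ⋆ Z = X ⋆ (Y ⋆ Z)`. -/
theorem hadamard_product_assoc (n : ℕ) (X Y Z : Set (Fin (n + 1) → ℂ))
    (hX0 : (0 : Fin (n + 1) → ℂ) ∉ X) (hY0 : (0 : Fin (n + 1) → ℂ) ∉ Y)
    (hZ0 : (0 : Fin (n + 1) → ℂ) ∉ Z)
    (hXc : ∀ (c : ℂ), c ≠ 0 → ∀ x ∈ X, c • x ∈ X)
    (hYc : ∀ (c : ℂ), c ≠ 0 → ∀ y ∈ Y, c • y ∈ Y)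
    (hZc : ∀ (c : ℂ), c ≠ 0 → ∀ z ∈ Z, c • z ∈ Z) :
    zclosure (hadSet (zclosure (hadSet X Y)) Z) =
        zclosure {w | w ≠ 0 ∧ ∃ x ∈ X, ∃ y ∈ Y, ∃ z ∈ Z, w = x * y * z} ∧
    zclosure (hadSet (zclosure (hadSet X Y)) Z) =
        zclosure (hadSet X (zclosure (hadSet Y Z))) := by
  have hL : hadSet (hadSet X Y) Z =
      {w | w ≠ 0 ∧ ∃ x ∈ X, ∃ y ∈ Y, ∃ z ∈ Z, w = x * y * z} := by
    ext w
    constructor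
    · rintro ⟨hw0, a, ⟨ha0, x, hx, y, hy, rfl⟩, z, hz, rfl⟩
      exact ⟨hw0, x, hx, y, hy, z, hz, rfl⟩
    · rintro ⟨hw0, x, hx, y, hy, z, hz, rfl⟩
      refine ⟨hw0, x * y, ⟨fun h0 => hw0 (by rw [h0, zero_mul]), x, hx, y, hy, rfl⟩,
        z, hz, rfl⟩
  have hR : hadSet X (hadSet Y Z) =
      {w | w ≠ 0 ∧ ∃ x ∈ X, ∃ y ∈ Y, ∃ z ∈ Z, w = x * y * z} := by
    ext w
    constructor
    · rintro ⟨hw0, x, hx, b, ⟨hb0, y, hy, z, hz, rfl⟩, rfl⟩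
      exact ⟨hw0, x, hx, y, hy, z, hz, (mul_assoc x y z).symm⟩
    · rintro ⟨hw0, x, hx, y, hy, z, hz, rfl⟩
      refine ⟨hw0, x, hx, y * z, ⟨fun h0 => hw0 ?_, y, hy, z, hz, rfl⟩, mul_assoc x y z⟩
      rw [mul_assoc, h0, mul_zero]
  have h1 : zclosure (hadSet (zclosure (hadSet X Y)) Z) =
      zclosure {w | w ≠ 0 ∧ ∃ x ∈ X, ∃ y ∈ Y, ∃ z ∈ Z, w = x * y * z} := by
    rw [zclosure_hadSet_zclosure_left, hL]
  have h2 : zclosure (hadSet X (zclosure (hadSet Y Z))) =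
      zclosure {w | w ≠ 0 ∧ ∃ x ∈ X, ∃ y ∈ Y, ∃ z ∈ Z, w = x * y * z} := by
    rw [zclosure_hadSet_zclosure_right, hR]
  exact ⟨h1, h1.trans h2.symm⟩
end
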